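/- arXiv:2509.14621 — 9 statements merged into one kernel-verified Lean document; each statement's English description precedes it below -/
import Mathlib

section
/- Let λ be a partition with Frobenius notation (p₁,...,p_N | q₁,...,q_N), let σ be a permutation in S_N, and let T=(t_{ij}) be a σ-tableau of shape λ (i.e., entries weakly increase along rows in the arm region D(p), strictly increase down columns in the leg region D(q) together with the diagonal B, and t_{σ(i),σ(i)} ≤ t_{i,i+1} whenever i+1 ≤ λ_i). Then for each k with 1 ≤ k ≤ N, the hook-shaped tableau T_k(σ) with top row (t_{σ(k),σ(k)}, t_{k,k+1}, ..., t_{k,k+p_k}) and first column continuing (t_{σ(k)+1,σ(k)}, ..., t_{σ(k)+q_{σ(k)},σ(k)}) is a semistandard Young tableau of hook shape (p_k+1, 1^{q_{σ(k)}}). -/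
open scoped BigOperators

/-- Boxes of Young-type diagrams, as pairs of natural numbers (row, column). -/
abbrev Box : Type := ℕ × ℕ

/-- Semistandardness of a filling `t` of the (generalized, possibly skew or laced)
shape `θ`: positive entries, weakly increasing along rows, strictly increasing
down columns, normalized to `1` outside the shape. -/
def IsSSYT (θ : Finset Box) (t : Box → ℕ) : Prop :=
  (∀ x ∈ θ, 0 < t x) ∧
  (∀ i j : ℕ, (i, j) ∈ θ → (i, j + 1) ∈ θ → t (i, j) ≤ t (i, j + 1)) ∧
  (∀ i j : ℕ, (i, j) ∈ θ → (i + 1, j) ∈ θ → t (i, j) < t (i + 1, j)) ∧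
  (∀ x, x ∉ θ → t x = 1)

/-- The type of semistandard Young tableaux of shape `θ`. -/
def SSYT (θ : Finset Box) : Type := {t : Box → ℕ // IsSSYT θ t}

/-- The weight `w(s, t) = ∏_{x ∈ θ} t(x)^{-s(x)}` of a filling `t` with complex
exponents `s`. -/
noncomputable def wt (θ : Finset Box) (s : Box → ℂ) (t : Box → ℕ) : ℂ :=
  ∏ x ∈ θ, (t x : ℂ) ^ (-(s x))

/-- The Schur multiple zeta value attached to a shape `θ` and a complex filling `s`. -/
noncomputable def zetaS (θ : Finset Box) (s : Box → ℂ) : ℂ :=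
  ∑' T : SSYT θ, wt θ s T.1

/-- The corners of a shape: boxes having no neighbour to the right nor below. -/
def corners (θ : Finset Box) : Finset Box :=
  θ.filter fun x => (x.1, x.2 + 1) ∉ θ ∧ (x.1 + 1, x.2) ∉ θ

/-- The Young diagram (0-indexed) with Frobenius notation `(p₁,…,p_N | q₁,…,q_N)`:
for each `k < N` the diagonal box `(k,k)`, the arm `(k, k+1), …, (k, k + p k)`
and the leg `(k+1, k), …, (k + q k, k)`. -/
def frobShape (N : ℕ) (p q : ℕ → ℕ) : Finset Box :=
  (Finset.range N).biUnion fun k =>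
    ((Finset.range (p k + 1)).image fun a => (k, k + a)) ∪
    ((Finset.range (q k)).image fun b => (k + 1 + b, k))

/-- The hook shape `(a+1, 1^b)`. -/
def hookShape (a b : ℕ) : Finset Box := frobShape 1 (fun _ => a) (fun _ => b)

/-- Valid Frobenius data: the arm and leg lengths are strictly decreasing. -/
def FrobData (N : ℕ) (p q : ℕ → ℕ) : Prop :=
  ∀ k : ℕ, k + 1 < N → p (k + 1) < p k ∧ q (k + 1) < q k

/-- The arm region `D(p)` of `λ = (p | q)`. -/
def Dp (N : ℕ) (p : ℕ → ℕ) : Finset Box :=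
  (Finset.range N).biUnion fun k => (Finset.range (p k)).image fun a => (k, k + 1 + a)

/-- The leg-plus-diagonal region `D(q) ∪ B` of `λ = (p | q)`. -/
def DqB (N : ℕ) (q : ℕ → ℕ) : Finset Box :=
  (Finset.range N).biUnion fun k => (Finset.range (q k + 1)).image fun b => (k + b, k)

/-- The semistandard conditions restricted to a region `R`. -/
def SSYTOn (R : Finset Box) (t : Box → ℕ) : Prop :=
  (∀ i j : ℕ, (i, j) ∈ R → (i, j + 1) ∈ R → t (i, j) ≤ t (i, j + 1)) ∧
  (∀ i j : ℕ, (i, j) ∈ R → (i + 1, j) ∈ R → t (i, j) < t (i + 1, j))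

/-- Positive entries plus semistandard conditions on a region. -/
def IsSSYTOn (θ : Finset Box) (t : Box → ℕ) : Prop :=
  (∀ x ∈ θ, 0 < t x) ∧ SSYTOn θ t

/-- A `σ`-tableau of shape `λ = (p | q)` (Frobenius notation, `0`-indexed):
(I) rows weakly increase within the arm region `D(p)`,
(II) columns strictly increase within the leg-plus-diagonal region `D(q) ∪ B`,
(III) `t (σ i, σ i) ≤ t (i, i+1)` whenever the arm of row `i` is nonempty. -/
structure IsSigmaTab (N : ℕ) (p q : ℕ → ℕ) (σ : Equiv.Perm (Fin N)) (t : Box → ℕ) : Prop where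
  pos : ∀ x ∈ frobShape N p q, 0 < t x
  rowArm : ∀ k : ℕ, k < N → ∀ j : ℕ, k < j → j < k + p k → t (k, j) ≤ t (k, j + 1)
  colLeg : ∀ k : ℕ, k < N → ∀ i : ℕ, k ≤ i → i < k + q k → t (i, k) < t (i + 1, k)
  diagCond : ∀ i : Fin N, 0 < p i.1 → t ((σ i).1, (σ i).1) ≤ t (i.1, i.1 + 1)

/-- The hook tableau `T_k(σ)`: top row `(t(σk,σk), t(k,k+1), …, t(k,k+p_k))`,
first column continuing with `t(σk+1, σk), …, t(σk + q_{σk}, σk)`;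
value `1` outside the hook shape. -/
def hookOf {N : ℕ} (p q : ℕ → ℕ) (σ : Equiv.Perm (Fin N)) (t : Box → ℕ) (k : Fin N) :
    Box → ℕ := fun x =>
  if x.1 = 0 ∧ x.2 ≤ p k.1 then
    if x.2 = 0 then t ((σ k).1, (σ k).1) else t (k.1, k.1 + x.2)
  else if x.2 = 0 ∧ 0 < x.1 ∧ x.1 ≤ q (σ k).1 then t ((σ k).1 + x.1, (σ k).1)
  else 1

/-- A failure of the semistandard condition at the north-east boundary of the
main diagonal, at the box `(k, k+1)`. -/
def BoundaryFail (N : ℕ) (p q : ℕ → ℕ) (t : Box → ℕ) (k : ℕ) : Prop :=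
  k < N ∧ 0 < p k ∧
    (t (k, k + 1) < t (k, k) ∨
      ((k + 1, k + 1) ∈ frobShape N p q ∧ t (k + 1, k + 1) ≤ t (k, k + 1)))

/-- A bound on the coordinates of a shape. -/
def bnd (θ : Finset Box) : ℕ := θ.sup fun x => max x.1 x.2

/-- The transpose of a shape with respect to the anti-diagonal. -/
def adt (θ : Finset Box) : Finset Box := θ.image fun x => (bnd θ - x.2, bnd θ - x.1)

/-- The anti-diagonal transpose of a filling of `θ`. -/
def adtFill {α : Type*} (θ : Finset Box) (γ : Box → α) : Box → α :=
  fun x => γ (bnd θ - x.2, bnd θ - x.1)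

/-- Skew shapes: set differences of Young diagrams of partitions `μ ⊆ λ`. -/
def IsSkewShape (θ : Finset Box) : Prop :=
  ∃ lam mu : ℕ → ℕ, Antitone lam ∧ Antitone mu ∧ (∀ i, mu i ≤ lam i) ∧
    ∀ x : Box, x ∈ θ ↔ mu x.1 ≤ x.2 ∧ x.2 < lam x.1

/-- Shapes of ordinary (non-skew) Young diagrams: closed to the left and upwards. -/
def IsYoungShape (θ : Finset Box) : Prop :=
  (∀ i j : ℕ, (i + 1, j) ∈ θ → (i, j) ∈ θ) ∧ (∀ i j : ℕ, (i, j + 1) ∈ θ → (i, j) ∈ θ)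

/-- The quasi-symmetric Schur function `S_θ(γ)` as a formal power series in the
variables `t₁, t₂, …` (indexed by `ℕ`): the coefficient of a monomial `d` is
the number of semistandard tableaux `T` of shape `θ` with
`∏_{x ∈ θ} t_{T x}^{γ x} = t^d`. -/
noncomputable def schurQ (θ : Finset Box) (γ : Box → ℕ) : MvPowerSeries ℕ ℚ :=
  fun d => (Nat.card {T : SSYT θ // (∑ x ∈ θ, Finsupp.single (T.1 x) (γ x)) = d} : ℚ)

/-- The monomial quasi-symmetric function `M_I = ∑_{0 < m₁ < … < m_k} ∏ t_{mᵢ}^{Iᵢ}`. -/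
noncomputable def monomialQ (I : List ℕ) : MvPowerSeries ℕ ℚ :=
  fun d => (Nat.card {m : Fin I.length → ℕ // StrictMono m ∧ (∀ i, 0 < m i) ∧
    (∑ i, Finsupp.single (m i) (I.get i)) = d} : ℚ)

/-- The coarsening of a composition determined by a set `B` of internal break
points: adjacent parts are merged unless separated by a break in `B`. -/
def coarsenFrom (B : Finset ℕ) : ℕ → List ℕ → List ℕ
  | _, [] => []
  | _, [a] => [a]
  | n, a :: b :: rest =>
      if n ∈ B then a :: coarsenFrom B (n + 1) (b :: rest)
      else coarsenFrom B (n + 1) ((a + b) :: rest)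

/-- Translation of a shape by `(u, v)`. -/
def shiftShape (u v : ℕ) (θ : Finset Box) : Finset Box := θ.image fun x => (u + x.1, v + x.2)

/-- The laced hook shape `[λ_* | (p i + 1, 1^{q j}) | λ^*]`, with the middle hook placed
at offset `(u, v)`, the south-west wing `A` attached when `j = 0` and the north-east
wing `C` attached when `i = 0`. -/
def lacedHookShape (A C : Finset Box) (u v : ℕ) (p q : ℕ → ℕ) (i j : ℕ) : Finset Box :=
  (if j = 0 then A else ∅) ∪ shiftShape u v (hookShape (p i) (q j)) ∪ (if i = 0 then C else ∅)

/-- The laced hook tableau `T̃_k(σ)`: the wing entries of `tt` together with the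
hook tableau `T_k(σ)` of the middle part (placed at offset `(u, v)`). -/
def lacedHookTab {N : ℕ} (A C : Finset Box) (u v : ℕ) (p q : ℕ → ℕ)
    (σ : Equiv.Perm (Fin N)) (tt : Box → ℕ) (k : Fin N) : Box → ℕ := fun x =>
  if ((σ k).1 = 0 ∧ x ∈ A) ∨ (k.1 = 0 ∧ x ∈ C) then tt x
  else if u ≤ x.1 ∧ v ≤ x.2 then
    hookOf p q σ (fun y => tt (u + y.1, v + y.2)) k (x.1 - u, x.2 - v)
  else 1
lemma mem_hookShape {a b : ℕ} {x : Box} :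
    x ∈ hookShape a b ↔ (x.1 = 0 ∧ x.2 ≤ a) ∨ (x.2 = 0 ∧ 0 < x.1 ∧ x.1 ≤ b) := by
  obtain ⟨i, j⟩ := x
  simp only [hookShape, frobShape, Finset.mem_biUnion, Finset.mem_union, Finset.mem_image,
    Finset.mem_range, Nat.lt_succ_iff, Prod.mk.injEq]
  constructor
  · rintro ⟨k, hk, ⟨a', ha, rfl, rfl⟩ | ⟨b', hb, rfl, rfl⟩⟩
    · left; omega
    · right; omega
  · rintro (⟨rfl, h⟩ | ⟨rfl, h1, h2⟩)
    · exact ⟨0, le_rfl, Or.inl ⟨j, h, rfl, by omega⟩⟩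
    · exact ⟨0, le_rfl, Or.inr ⟨i - 1, by omega, by omega, rfl⟩⟩

lemma arm_mem_frobShape {N : ℕ} {p q : ℕ → ℕ} {k j : ℕ} (hk : k < N) (hj : j ≤ p k) :
    (k, k + j) ∈ frobShape N p q := by
  simp only [frobShape, Finset.mem_biUnion, Finset.mem_union, Finset.mem_image,
    Finset.mem_range]
  exact ⟨k, hk, Or.inl ⟨j, by omega, rfl⟩⟩

lemma leg_mem_frobShape {N : ℕ} {p q : ℕ → ℕ} {k i : ℕ} (hk : k < N) (hi : i ≤ q k) :
    (k + i, k) ∈ frobShape N p q := by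
  rcases Nat.eq_zero_or_pos i with rfl | hpos
  · simpa using arm_mem_frobShape (p := p) (q := q) hk (Nat.zero_le _)
  · simp only [frobShape, Finset.mem_biUnion, Finset.mem_union, Finset.mem_image,
      Finset.mem_range]
    exact ⟨k, hk, Or.inr ⟨i - 1, by omega, by simp; omega⟩⟩

lemma hookOf_diag {N : ℕ} (p q : ℕ → ℕ) (σ : Equiv.Perm (Fin N)) (t : Box → ℕ) (k : Fin N) :
    hookOf p q σ t k (0, 0) = t ((σ k).1, (σ k).1) := by
  simp [hookOf]

lemma hookOf_row {N : ℕ} (p q : ℕ → ℕ) (σ : Equiv.Perm (Fin N)) (t : Box → ℕ) (k : Fin N)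
    {j : ℕ} (h0 : 0 < j) (h : j ≤ p k.1) :
    hookOf p q σ t k (0, j) = t (k.1, k.1 + j) := by
  have hj : ¬ j = 0 := by omega
  simp [hookOf, h, hj]

lemma hookOf_col {N : ℕ} (p q : ℕ → ℕ) (σ : Equiv.Perm (Fin N)) (t : Box → ℕ) (k : Fin N)
    {i : ℕ} (h0 : 0 < i) (h : i ≤ q (σ k).1) :
    hookOf p q σ t k (i, 0) = t ((σ k).1 + i, (σ k).1) := by
  have hi : ¬ i = 0 := by omega
  simp [hookOf, h, h0, hi]

/-- For a `σ`-tableau `t` of shape `λ = (p | q)`, each hook tableau `T_k(σ)` is a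
semistandard Young tableau of hook shape `(p_k + 1, 1^{q_{σ(k)}})`. -/
theorem giambelli_hook_ssyt (N : ℕ) (p q : ℕ → ℕ) (hfr : FrobData N p q)
    (σ : Equiv.Perm (Fin N)) (t : Box → ℕ) (ht : IsSigmaTab N p q σ t) (k : Fin N) :
    IsSSYT (hookShape (p k.1) (q (σ k).1)) (hookOf p q σ t k) := by
  have hkN : k.1 < N := k.2
  have hsN : (σ k).1 < N := (σ k).2
  refine ⟨?_, ?_, ?_, ?_⟩
  · -- positivity
    rintro ⟨i, j⟩ hx
    rcases mem_hookShape.mp hx with ⟨h1, h2⟩ | ⟨h1, h2, h3⟩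
    · simp only at h1 h2; subst h1
      rcases Nat.eq_zero_or_pos j with rfl | hj
      · rw [hookOf_diag]
        exact ht.pos _ (by simpa using leg_mem_frobShape (p := p) hsN (Nat.zero_le _))
      · rw [hookOf_row _ _ _ _ _ hj h2]
        exact ht.pos _ (arm_mem_frobShape hkN h2)
    · simp only at h1 h2 h3; subst h1
      rw [hookOf_col _ _ _ _ _ h2 h3]
      exact ht.pos _ (leg_mem_frobShape hsN h3)
  · -- rows
    intro i j h1 h2
    rcases mem_hookShape.mp h2 with ⟨hi0, hj⟩ | ⟨h, _⟩
    · simp only at hi0 hj; subst hi0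
      rcases Nat.eq_zero_or_pos j with rfl | hj0
      · rw [hookOf_diag, hookOf_row _ _ _ _ _ Nat.one_pos hj]
        exact ht.diagCond k (by omega)
      · rw [hookOf_row _ _ _ _ _ hj0 (by omega), hookOf_row _ _ _ _ _ (by omega) hj]
        have := ht.rowArm k.1 hkN (k.1 + j) (by omega) (by omega)
        simpa [Nat.add_assoc] using this
    · omega
  · -- columns
    intro i j h1 h2
    rcases mem_hookShape.mp h2 with ⟨hi0, _⟩ | ⟨hj0, _, hi⟩
    · omega
    · simp only at hj0 hi; subst hj0
      rcases Nat.eq_zero_or_pos i with rfl | hi0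
      · rw [hookOf_diag, hookOf_col _ _ _ _ _ Nat.one_pos hi]
        have := ht.colLeg (σ k).1 hsN (σ k).1 le_rfl (by omega)
        simpa using this
      · rw [hookOf_col _ _ _ _ _ hi0 (by omega), hookOf_col _ _ _ _ _ (by omega) hi]
        have := ht.colLeg (σ k).1 hsN ((σ k).1 + i) (by omega) (by omega)
        simpa [Nat.add_assoc] using this
  · -- outside
    rintro ⟨i, j⟩ hx
    rw [mem_hookShape, not_or] at hx
    simp only [not_and, not_le] at hx
    obtain ⟨hx1, hx2⟩ := hx
    simp only [hookOf]
    rw [if_neg, if_neg]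
    · rintro ⟨h1, h2, h3⟩; exact absurd (hx2 h1 h2) (by omega)
    · rintro ⟨h1, h2⟩; exact absurd (hx1 h1) (by omega)
end

section
/- Let λ be a partition with Frobenius notation (p₁,...,p_N | q₁,...,q_N) and let T be a semistandard Young tableau of shape λ. If σ ∈ S_N is a permutation with σ ≠ id, then T is not a σ-tableau; that is, there exists an index i such that t_{σ(i),σ(i)} > t_{i,i+1} (with i+1 ≤ λ_i), or one of the row/column monotonicity conditions fails. Moreover, T is always an id-tableau. -/
open scoped BigOperators

lemma mem_frob_row {N : ℕ} {p q : ℕ → ℕ} {k j : ℕ} (hk : k < N) (h1 : k ≤ j)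
    (h2 : j ≤ k + p k) : (k, j) ∈ frobShape N p q := by
  simp only [frobShape, Finset.mem_biUnion, Finset.mem_range, Finset.mem_union,
    Finset.mem_image]
  exact ⟨k, hk, Or.inl ⟨j - k, by omega, by simp [Prod.ext_iff]; omega⟩⟩

lemma mem_frob_col {N : ℕ} {p q : ℕ → ℕ} {k i : ℕ} (hk : k < N) (h1 : k ≤ i)
    (h2 : i ≤ k + q k) : (i, k) ∈ frobShape N p q := by
  simp only [frobShape, Finset.mem_biUnion, Finset.mem_range, Finset.mem_union,
    Finset.mem_image]
  rcases Nat.eq_or_lt_of_le h1 with h | h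
  · exact ⟨k, hk, Or.inl ⟨0, by omega, by simp [Prod.ext_iff]; omega⟩⟩
  · exact ⟨k, hk, Or.inr ⟨i - k - 1, by omega, by simp [Prod.ext_iff]; omega⟩⟩

lemma diag_lt {N : ℕ} {p q : ℕ → ℕ} (hfr : FrobData N p q) {t : Box → ℕ}
    (ht : IsSSYT (frobShape N p q) t) {m : ℕ} (hm : m + 1 < N) :
    t (m, m) < t (m + 1, m + 1) := by
  have hq : 0 < q m := by have := hfr m hm; omega
  have h1 : t (m, m) < t (m + 1, m) :=
    ht.2.2.1 m m (mem_frob_col (by omega) le_rfl (by omega))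
      (mem_frob_col (by omega) (by omega) (by omega))
  have h2 : t (m + 1, m) ≤ t (m + 1, m + 1) :=
    ht.2.1 (m + 1) m (mem_frob_col (by omega) (by omega) (by omega))
      (mem_frob_row hm le_rfl (by omega))
  omega

lemma diag_mono {N : ℕ} {p q : ℕ → ℕ} (hfr : FrobData N p q) {t : Box → ℕ}
    (ht : IsSSYT (frobShape N p q) t) {a b : ℕ} (hab : a ≤ b) (hb : b < N) :
    t (a, a) ≤ t (b, b) := by
  induction b with
  | zero => simp_all
  | succ n ih =>
    rcases Nat.eq_or_lt_of_le hab with h | h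
    · subst h; exact le_rfl
    · exact le_trans (ih (by omega) (by omega)) (le_of_lt (diag_lt hfr ht hb))

/-- A semistandard Young tableau of shape `λ = (p | q)` is an `id`-tableau, and is
not a `σ`-tableau for any `σ ≠ id`. -/
theorem ssyt_only_id_tableau (N : ℕ) (p q : ℕ → ℕ) (hfr : FrobData N p q)
    (t : Box → ℕ) (ht : IsSSYT (frobShape N p q) t) :
    IsSigmaTab N p q 1 t ∧
      ∀ σ : Equiv.Perm (Fin N), σ ≠ 1 → ¬ IsSigmaTab N p q σ t := by
  constructor
  · refine ⟨ht.1, ?_, ?_, ?_⟩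
    · intro k hk j hkj hjp
      exact ht.2.1 k j (mem_frob_row hk (by omega) (by omega))
        (mem_frob_row hk (by omega) (by omega))
    · intro k hk i hki hiq
      exact ht.2.2.1 i k (mem_frob_col hk hki (by omega))
        (mem_frob_col hk (by omega) (by omega))
    · intro i hpi
      simp only [Equiv.Perm.coe_one, id_eq]
      exact ht.2.1 i.1 i.1 (mem_frob_row i.2 le_rfl (by omega))
        (mem_frob_row i.2 (by omega) (by omega))
  · intro σ hσ hst
    have hex : ∃ i : Fin N, σ i ≠ i := by
      by_contra h
      push_neg at h
      exact hσ (Equiv.ext fun i => h i)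
    classical
    obtain ⟨i, hi, hmin⟩ := Finset.exists_min_image
      (Finset.univ.filter fun i : Fin N => σ i ≠ i) id
      (Finset.filter_nonempty_iff.mpr
        (by obtain ⟨i, hi⟩ := hex; exact ⟨i, Finset.mem_univ i, hi⟩))
    simp only [Finset.mem_filter, Finset.mem_univ, true_and] at hi
    have hlt : i < σ i := by
      rcases lt_trichotomy (σ i) i with h | h | h
      · have : σ (σ i) = σ i := by
          by_contra hne
          have := hmin (σ i) (Finset.mem_filter.mpr ⟨Finset.mem_univ (σ i), hne⟩)
          simp only [id] at this
          exact absurd h (not_lt.mpr this)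
        exact absurd (σ.injective this) hi
      · exact absurd h hi
      · exact h
    have hlt' : i.1 < (σ i).1 := hlt
    have hN : i.1 + 1 < N := by have := (σ i).2; omega
    have hp : 0 < p i.1 := by have := hfr i.1 hN; omega
    have h3 := hst.diagCond i hp
    have h4 : t (i.1, i.1 + 1) < t (i.1 + 1, i.1 + 1) :=
      ht.2.2.1 i.1 (i.1 + 1) (mem_frob_row i.2 (by omega) (by omega))
        (mem_frob_row hN le_rfl (by omega))
    have h5 : t (i.1 + 1, i.1 + 1) ≤ t ((σ i).1, (σ i).1) :=
      diag_mono hfr ht (by omega) (σ i).2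
    omega
end

section
/- Let λ be a partition with Frobenius notation (p | q), σ ∈ S_N, and T a σ-tableau of shape λ that violates the semistandard condition within the arm region D(p) between rows i and i+1 (i.e., t_{i,k} ≥ t_{i+1,k} for some k ≥ i+2 in D(p)). Take k maximal with this property, set σ' = σ∘(i,i+1), and let T' be obtained from T by swapping the entries t_{i,h} and t_{i+1,h+1} for i+1 ≤ h ≤ k−1, leaving all other entries unchanged. Then T' is a σ'-tableau of shape λ. -/
open scoped BigOperators

/-- The row-swap operation on fillings used in case (i) of the cancellation lemma. -/
def swapFill (t : Box → ℕ) (i k : ℕ) : Box → ℕ := fun x =>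
  if x.1 = i ∧ i + 1 ≤ x.2 ∧ x.2 + 1 ≤ k then t (i + 1, x.2 + 1)
  else if x.1 = i + 1 ∧ i + 2 ≤ x.2 ∧ x.2 ≤ k then t (i, x.2 - 1)
  else t x

lemma swapFill_apply (t : Box → ℕ) (i k a b : ℕ) :
    swapFill t i k (a, b) =
      if a = i ∧ i + 1 ≤ b ∧ b + 1 ≤ k then t (i + 1, b + 1)
      else if a = i + 1 ∧ i + 2 ≤ b ∧ b ≤ k then t (i, b - 1)
      else t (a, b) := rfl

lemma mem_frobShape_arm (N : ℕ) (p q : ℕ → ℕ) (m j : ℕ) (hm : m < N) (h1 : m ≤ j)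
    (h2 : j ≤ m + p m) : (m, j) ∈ frobShape N p q := by
  simp only [frobShape, Finset.mem_biUnion, Finset.mem_range, Finset.mem_union,
    Finset.mem_image]
  exact ⟨m, hm, Or.inl ⟨j - m, by omega, by rw [Prod.mk.injEq]; omega⟩⟩

/-- Case (i) of the cancellation lemma: if a `σ`-tableau violates the semistandard
condition within the arm region `D(p)` between rows `i` and `i+1` (at a maximal
column `k`), then the tableau obtained by swapping `t(i,h)` with `t(i+1,h+1)` for
`i+1 ≤ h ≤ k-1` is a `σ ∘ (i, i+1)`-tableau. -/
theorem cancellation_case_rows (N : ℕ) (p q : ℕ → ℕ) (hfr : FrobData N p q)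
    (σ : Equiv.Perm (Fin N)) (t : Box → ℕ) (ht : IsSigmaTab N p q σ t)
    (i k : ℕ) (hi : i + 1 < N)
    (hk1 : i + 2 ≤ k) (hk2 : k ≤ i + 1 + p (i + 1))
    (hviol : t (i + 1, k) ≤ t (i, k))
    (hmax : ∀ k' : ℕ, k < k' → k' ≤ i + 1 + p (i + 1) → t (i, k') < t (i + 1, k')) :
    IsSigmaTab N p q (σ * Equiv.swap ⟨i, Nat.lt_of_succ_lt hi⟩ ⟨i + 1, hi⟩)
      (fun x =>
        if x.1 = i ∧ i + 1 ≤ x.2 ∧ x.2 + 1 ≤ k then t (i + 1, x.2 + 1)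
        else if x.1 = i + 1 ∧ i + 2 ≤ x.2 ∧ x.2 ≤ k then t (i, x.2 - 1)
        else t x) := by
  have hpi : p (i + 1) < p i := (hfr i hi).1
  have hp1 : 0 < p (i + 1) := by omega
  show IsSigmaTab N p q _ (swapFill t i k)
  constructor
  · -- positivity
    rintro ⟨a, b⟩ hx
    rw [swapFill_apply]
    by_cases h1 : a = i ∧ i + 1 ≤ b ∧ b + 1 ≤ k
    · rw [if_pos h1]
      exact ht.pos _ (mem_frobShape_arm N p q (i + 1) (b + 1) hi (by omega) (by omega))
    · rw [if_neg h1]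
      by_cases h2 : a = i + 1 ∧ i + 2 ≤ b ∧ b ≤ k
      · rw [if_pos h2]
        exact ht.pos _ (mem_frobShape_arm N p q i (b - 1) (by omega) (by omega) (by omega))
      · rw [if_neg h2]; exact ht.pos _ hx
  · -- rows in the arm region
    intro m hm j hj1 hj2
    by_cases hmi : m = i
    · subst hmi
      by_cases hc1 : j + 2 ≤ k
      · rw [swapFill_apply, if_pos (by omega), swapFill_apply, if_pos (by omega)]
        exact ht.rowArm (m + 1) hi (j + 1) (by omega) (by omega)
      · by_cases hc2 : j + 1 = k
        · rw [swapFill_apply, if_pos (by omega), swapFill_apply, if_neg (by omega),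
            if_neg (by omega), hc2]
          exact hviol
        · rw [swapFill_apply, if_neg (by omega), if_neg (by omega), swapFill_apply,
            if_neg (by omega), if_neg (by omega)]
          exact ht.rowArm m (by omega) j hj1 hj2
    · by_cases hmi' : m = i + 1
      · subst hmi'
        by_cases hc1 : j + 1 ≤ k
        · rw [swapFill_apply, if_neg (by omega), if_pos (by omega), swapFill_apply,
            if_neg (by omega), if_pos (by omega)]
          have e : j + 1 - 1 = (j - 1) + 1 := by omega
          rw [e]
          exact ht.rowArm i (by omega) (j - 1) (by omega) (by omega)
        · by_cases hc2 : j = k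
          · subst hc2
            rw [swapFill_apply, if_neg (by omega), if_pos (by omega), swapFill_apply,
              if_neg (by omega), if_neg (by omega)]
            calc t (i, j - 1) ≤ t (i, j) := by
                  have := ht.rowArm i (by omega) (j - 1) (by omega) (by omega)
                  have e : j - 1 + 1 = j := by omega
                  rwa [e] at this
              _ ≤ t (i, j + 1) := ht.rowArm i (by omega) j (by omega) (by omega)
              _ ≤ t (i + 1, j + 1) := le_of_lt (hmax (j + 1) (by omega) (by omega))
          · rw [swapFill_apply, if_neg (by omega), if_neg (by omega), swapFill_apply,
              if_neg (by omega), if_neg (by omega)]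
            exact ht.rowArm (i + 1) hm j hj1 hj2
      · rw [swapFill_apply, if_neg (by omega), if_neg (by omega), swapFill_apply,
          if_neg (by omega), if_neg (by omega)]
        exact ht.rowArm m hm j hj1 hj2
  · -- columns in the leg region
    intro m hm r h1 h2
    rw [swapFill_apply, if_neg (by omega), if_neg (by omega), swapFill_apply,
      if_neg (by omega), if_neg (by omega)]
    exact ht.colLeg m hm r h1 h2
  · -- diagonal condition
    intro m hmp
    set a : Fin N := ⟨i, Nat.lt_of_succ_lt hi⟩
    set b : Fin N := ⟨i + 1, hi⟩
    have hdiag : ∀ d : ℕ, swapFill t i k (d, d) = t (d, d) := by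
      intro d
      rw [swapFill_apply, if_neg (by omega), if_neg (by omega)]
    have hmul : ∀ x : Fin N, (σ * Equiv.swap a b) x = σ (Equiv.swap a b x) := fun _ => rfl
    by_cases hmi : m = a
    · subst hmi
      rw [hmul, Equiv.swap_apply_left, hdiag, swapFill_apply, if_pos (by first | (simp [a]; omega) | simp [a])]
      have := ht.diagCond b (by simpa [b] using hp1)
      simpa [a, b] using this
    · by_cases hmi' : m = b
      · subst hmi'
        rw [hmul, Equiv.swap_apply_right, hdiag, swapFill_apply,
          if_neg (by first | (simp [b]; omega) | simp [b]), if_pos (by first | (simp [b]; omega) | simp [b])]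
        have := ht.diagCond a (by first | (simp [a]; omega) | simp [a])
        have e : (b : Fin N).1 + 1 - 1 = (a : Fin N).1 + 1 := by simp [a, b]
        rw [e]
        exact this
      · rw [hmul, Equiv.swap_apply_of_ne_of_ne hmi hmi', hdiag]
        have hne1 : m.1 ≠ i := fun h => hmi (Fin.ext h)
        have hne2 : m.1 ≠ i + 1 := fun h => hmi' (Fin.ext h)
        rw [swapFill_apply, if_neg (by omega), if_neg (by omega)]
        exact ht.diagCond m hmp
end

section
/- Let λ be a partition with Frobenius notation (p | q), σ ∈ S_N, and T a σ-tableau of shape λ that satisfies the semistandard condition in the arm region D(p) but violates it in the leg-plus-diagonal region D(q)∪B between columns j and j+1 (i.e., t_{k,j} > t_{k,j+1} for some k ≥ j+1). Take k maximal with this property, set σ' = (j,j+1)∘σ, and let T' be obtained from T by swapping the entries t_{h,j} and t_{h+1,j+1} for j ≤ h ≤ k−1, leaving all other entries unchanged. Then T' is a σ'-tableau of shape λ. -/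
open scoped BigOperators

/-- Case (ii) of the cancellation lemma: if a `σ`-tableau satisfies the semistandard
condition in the arm region but violates it in the leg-plus-diagonal region between
columns `j` and `j+1` (at a maximal row `k`), then the tableau obtained by swapping
`t(h,j)` with `t(h+1,j+1)` for `j ≤ h ≤ k-1` is a `(j, j+1) ∘ σ`-tableau. -/
theorem cancellation_case_cols (N : ℕ) (p q : ℕ → ℕ) (hfr : FrobData N p q)
    (σ : Equiv.Perm (Fin N)) (t : Box → ℕ) (ht : IsSigmaTab N p q σ t)
    (hDp : SSYTOn (Dp N p) t)
    (j k : ℕ) (hj : j + 1 < N)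
    (hk1 : j + 1 ≤ k) (hk2 : k ≤ j + 1 + q (j + 1))
    (hviol : t (k, j + 1) < t (k, j))
    (hmax : ∀ k' : ℕ, k < k' → k' ≤ j + 1 + q (j + 1) → t (k', j) ≤ t (k', j + 1)) :
    IsSigmaTab N p q (Equiv.swap ⟨j, Nat.lt_of_succ_lt hj⟩ ⟨j + 1, hj⟩ * σ)
      (fun x =>
        if x.2 = j ∧ j ≤ x.1 ∧ x.1 + 1 ≤ k then t (x.1 + 1, j + 1)
        else if x.2 = j + 1 ∧ j + 1 ≤ x.1 ∧ x.1 ≤ k then t (x.1 - 1, j)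
        else t x) := by
  have hq : q (j + 1) < q j := (hfr j hj).2
  have hjN : j < N := Nat.lt_of_succ_lt hj
  set t' : Box → ℕ := fun x =>
      if x.2 = j ∧ j ≤ x.1 ∧ x.1 + 1 ≤ k then t (x.1 + 1, j + 1)
      else if x.2 = j + 1 ∧ j + 1 ≤ x.1 ∧ x.1 ≤ k then t (x.1 - 1, j)
      else t x with ht'
  have hmem : ∀ m i : ℕ, m < N → m ≤ i → i ≤ m + q m → (i, m) ∈ frobShape N p q := by
    intro m i hm h1 h2
    simp only [frobShape, Finset.mem_biUnion, Finset.mem_range, Finset.mem_union,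
      Finset.mem_image]
    refine ⟨m, hm, ?_⟩
    rcases eq_or_lt_of_le h1 with h | h
    · exact Or.inl ⟨0, by omega, by simp only [Prod.mk.injEq, and_true, true_and]; omega⟩
    · exact Or.inr ⟨i - m - 1, by omega, by simp only [Prod.mk.injEq, and_true, true_and]; omega⟩
  have hA : ∀ a : ℕ, j ≤ a → a + 1 ≤ k → t' (a, j) = t (a + 1, j + 1) := by
    intro a h1 h2
    simp only [ht']
    split_ifs with h h3
    · rfl
    · exact absurd ⟨trivial, h1, h2⟩ h
    · exact absurd ⟨trivial, h1, h2⟩ h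
  have hB : ∀ a : ℕ, k ≤ a → t' (a, j) = t (a, j) := by
    intro a ha
    simp only [ht']
    split_ifs with h h3
    · exact absurd h (by omega)
    · exact absurd h3 (by omega)
    · rfl
  have hC : ∀ a : ℕ, j ≤ a → a < k → t' (a + 1, j + 1) = t (a, j) := by
    intro a h1 h2
    simp only [ht']
    split_ifs with h h3
    · exact absurd h (by omega)
    · rw [Nat.add_sub_cancel]
    · exact absurd ⟨trivial, by omega, by omega⟩ h3
  have hD : ∀ a : ℕ, k < a → t' (a, j + 1) = t (a, j + 1) := by
    intro a ha
    simp only [ht']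
    split_ifs with h h3
    · exact absurd h (by omega)
    · exact absurd h3 (by omega)
    · rfl
  have hE : ∀ a b : ℕ, b ≠ j → b ≠ j + 1 → t' (a, b) = t (a, b) := by
    intro a b hb1 hb2
    simp only [ht']
    split_ifs with h h3
    · exact absurd h.1 hb1
    · exact absurd h3.1 hb2
    · rfl
  have hArm : ∀ a b : ℕ, a < b → t' (a, b) = t (a, b) := by
    intro a b hab
    simp only [ht']
    split_ifs with h h3
    · exact absurd h (by omega)
    · exact absurd h3 (by omega)
    · rfl
  refine ⟨?_, ?_, ?_, ?_⟩
  · -- positivity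
    intro x hx
    simp only [ht']
    split_ifs with h1 h2
    · exact ht.pos _ (hmem (j + 1) (x.1 + 1) hj (by omega) (by omega))
    · exact ht.pos _ (hmem j (x.1 - 1) hjN (by omega) (by omega))
    · exact ht.pos x hx
  · -- rows in the arm region
    intro a ha b hb1 hb2
    rw [hArm a b hb1, hArm a (b + 1) (by omega)]
    exact ht.rowArm a ha b hb1 hb2
  · -- columns in the leg-plus-diagonal region
    intro m hm i h1 h2
    by_cases hmj : m = j
    · rw [hmj] at h1 h2 ⊢
      rcases lt_trichotomy (i + 1) k with hc | hc | hc
      · rw [hA i h1 (by omega), hA (i + 1) (by omega) (by omega)]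
        exact ht.colLeg (j + 1) hj (i + 1) (by omega) (by omega)
      · rw [hA i h1 (by omega), hB (i + 1) (by omega), hc]
        exact hviol
      · rw [hB i (by omega), hB (i + 1) (by omega)]
        exact ht.colLeg j hjN i h1 h2
    · by_cases hmj1 : m = j + 1
      · subst hmj1
        obtain ⟨a, rfl⟩ : ∃ a, i = a + 1 := ⟨i - 1, by omega⟩
        rcases lt_trichotomy (a + 1) k with hc | hc | hc
        · rw [hC a (by omega) (by omega), hC (a + 1) (by omega) (by omega)]
          exact ht.colLeg j hjN a (by omega) (by omega)
        · rw [hC a (by omega) (by omega), hD (a + 1 + 1) (by omega)]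
          have e1 : t (a, j) < t (a + 1, j) := ht.colLeg j hjN a (by omega) (by omega)
          have e2 : t (a + 1, j) < t (a + 1 + 1, j) :=
            ht.colLeg j hjN (a + 1) (by omega) (by omega)
          have e3 : t (a + 1 + 1, j) ≤ t (a + 1 + 1, j + 1) :=
            hmax (a + 1 + 1) (by omega) (by omega)
          exact lt_of_lt_of_le (e1.trans e2) e3
        · rw [hD (a + 1) (by omega), hD (a + 1 + 1) (by omega)]
          exact ht.colLeg (j + 1) hj (a + 1) h1 h2
      · rw [hE i m hmj hmj1, hE (i + 1) m hmj hmj1]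
        exact ht.colLeg m hm i h1 h2
  · -- the diagonal condition
    intro i hpi
    rw [hArm i.1 (i.1 + 1) (by omega)]
    have hmul : (Equiv.swap (⟨j, Nat.lt_of_succ_lt hj⟩ : Fin N) ⟨j + 1, hj⟩ * σ) i
        = Equiv.swap (⟨j, Nat.lt_of_succ_lt hj⟩ : Fin N) ⟨j + 1, hj⟩ (σ i) := rfl
    rw [hmul]
    rcases eq_or_ne (σ i) (⟨j, Nat.lt_of_succ_lt hj⟩ : Fin N) with h | h
    · rw [h, Equiv.swap_apply_left]
      have hd := ht.diagCond i hpi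
      rw [h] at hd
      exact le_of_eq_of_le (hC j le_rfl (by omega)) hd
    · rcases eq_or_ne (σ i) (⟨j + 1, hj⟩ : Fin N) with h2 | h2
      · rw [h2, Equiv.swap_apply_right]
        have hd := ht.diagCond i hpi
        rw [h2] at hd
        exact le_of_eq_of_le (hA j le_rfl (by omega)) hd
      · rw [Equiv.swap_apply_of_ne_of_ne h h2]
        have hne1 : (σ i).1 ≠ j := fun hh => h (Fin.ext hh)
        have hne2 : (σ i).1 ≠ j + 1 := fun hh => h2 (Fin.ext hh)
        exact le_of_eq_of_le (hE (σ i).1 (σ i).1 hne1 hne2) (ht.diagCond i hpi)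
end

section
/- Let λ be a partition with Frobenius notation (p | q), σ ∈ S_N, and T a σ-tableau of shape λ that satisfies the semistandard conditions in both the arm region D(p) and the leg-plus-diagonal region D(q)∪B, but fails the semistandard condition at some box on the north-east boundary of the main diagonal. Let k be minimal such that the failure occurs at position (k,k+1). Then σ(h) = h for all h ≤ k−1. -/
open scoped BigOperators

/-- Membership in the leg-plus-diagonal region. -/
lemma dqb_mem_aux (N : ℕ) (q : ℕ → ℕ) (c b0 : ℕ) (hc : c < N) (hb : b0 ≤ q c) :
    ((c + b0 : ℕ), c) ∈ DqB N q := by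
  simp only [DqB, Finset.mem_biUnion, Finset.mem_range, Finset.mem_image]
  exact ⟨c, hc, b0, by omega, rfl⟩

/-- The diagonal boxes belong to the Frobenius shape. -/
lemma frob_diag_mem_aux (N : ℕ) (p q : ℕ → ℕ) (m : ℕ) (hm : m < N) :
    ((m : ℕ), m) ∈ frobShape N p q := by
  simp only [frobShape, Finset.mem_biUnion, Finset.mem_range, Finset.mem_union,
    Finset.mem_image]
  exact ⟨m, hm, Or.inl ⟨0, by omega, by simp⟩⟩

/-- Case (iii) of the cancellation lemma, first claim: if a `σ`-tableau is
semistandard within `D(p)` and within `D(q) ∪ B` but fails the semistandard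
condition at the north-east boundary of the diagonal, with `k` minimal such that a
failure occurs at `(k, k+1)`, then `σ(h) = h` for all `h ≤ k - 1`. -/
theorem boundary_fail_fixes_initial (N : ℕ) (p q : ℕ → ℕ) (hfr : FrobData N p q)
    (σ : Equiv.Perm (Fin N)) (t : Box → ℕ) (ht : IsSigmaTab N p q σ t)
    (hDp : SSYTOn (Dp N p) t) (hDq : SSYTOn (DqB N q) t)
    (k : ℕ) (hfail : BoundaryFail N p q t k)
    (hmin : ∀ k' : ℕ, k' < k → ¬ BoundaryFail N p q t k') :
    ∀ h : Fin N, h.1 < k → σ h = h := by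
  obtain ⟨hkN, hpk, _⟩ := hfail
  -- p is (weakly) decreasing below N
  have hple : ∀ a b : ℕ, a ≤ b → b < N → p b ≤ p a := by
    intro a b hab hbN
    induction b with
    | zero =>
      have ha : a = 0 := by omega
      subst ha; exact le_refl _
    | succ b ihb =>
      rcases Nat.lt_or_ge a (b + 1) with h' | h'
      · have hx : p (b + 1) < p b := (hfr b hbN).1
        have := ihb (by omega) (by omega)
        omega
      · have : a = b + 1 := by omega
        subst this; exact le_refl _
  -- diagonal entries strictly increase, one step
  have step : ∀ a : ℕ, a + 1 < N → t (a, a) < t (a + 1, a + 1) := by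
    intro a ha
    have hq : 1 ≤ q a := by have := (hfr a ha).2; omega
    have m1 : ((a : ℕ), a) ∈ DqB N q := by
      have := dqb_mem_aux N q a 0 (by omega) (by omega); simpa using this
    have m2 : ((a + 1 : ℕ), a) ∈ DqB N q := dqb_mem_aux N q a 1 (by omega) hq
    have m3 : ((a + 1 : ℕ), a + 1) ∈ DqB N q := by
      have := dqb_mem_aux N q (a + 1) 0 ha (by omega); simpa using this
    have hcol : t (a, a) < t (a + 1, a) := hDq.2 a a m1 m2
    have hrow : t (a + 1, a) ≤ t (a + 1, a + 1) := hDq.1 (a + 1) a m2 m3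
    omega
  -- diagonal entries strictly increase
  have hdiag : ∀ a b : ℕ, a < b → b < N → t (a, a) < t (b, b) := by
    intro a b hab hbN
    induction b with
    | zero => omega
    | succ b ihb =>
      rcases Nat.lt_or_ge a b with h' | h'
      · exact (ihb h' (by omega)).trans (step b hbN)
      · have : a = b := by omega
        subst this; exact step a hbN
  suffices H : ∀ n : ℕ, ∀ h : Fin N, h.1 = n → h.1 < k → σ h = h by
    intro h hk; exact H h.1 h rfl hk
  intro n
  induction n using Nat.strong_induction_on with
  | _ n ih =>
    intro h hn hk
    by_contra hne
    have hgt : h.1 < (σ h).1 := by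
      rcases lt_trichotomy (σ h).1 h.1 with hlt | heq | hgt
      · have hfix : σ (σ h) = σ h := ih (σ h).1 (by omega) (σ h) rfl (by omega)
        exact absurd (σ.injective hfix) hne
      · exact absurd (Fin.ext heq) hne
      · exact hgt
    have hph : 0 < p h.1 := lt_of_lt_of_le hpk (hple h.1 k hk.le hkN)
    -- condition (III)
    have h1 : t ((σ h).1, (σ h).1) ≤ t (h.1, h.1 + 1) := ht.diagCond h hph
    -- diagonal chain from h+1 to σ h
    have h2 : t (h.1 + 1, h.1 + 1) ≤ t ((σ h).1, (σ h).1) := by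
      rcases eq_or_lt_of_le (show h.1 + 1 ≤ (σ h).1 by omega) with he | hl
      · rw [he]
      · exact le_of_lt (hdiag (h.1 + 1) (σ h).1 hl (σ h).isLt)
    -- no failure at h
    have h3 : t (h.1, h.1 + 1) < t (h.1 + 1, h.1 + 1) := by
      have hnf := hmin h.1 hk
      have hmem : ((h.1 + 1 : ℕ), h.1 + 1) ∈ frobShape N p q :=
        frob_diag_mem_aux N p q (h.1 + 1) (by omega)
      by_contra hle
      push_neg at hle
      exact hnf ⟨by omega, hph, Or.inr ⟨hmem, hle⟩⟩
    omega
end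

section
/- Let λ be a partition with Frobenius notation (p | q), σ ∈ S_N, and T a σ-tableau of shape λ that satisfies the semistandard conditions in D(p) and in D(q)∪B, but fails at the north-east boundary of the diagonal; let k be minimal with a failure at box (k,k+1). Then the case t_{k,k} > t_{k,k+1} cannot occur; i.e., the failure must be t_{k+1,k+1} ≤ t_{k,k+1}. -/
open scoped BigOperators

/-- Case (iii) of the cancellation lemma, second claim: with `k` minimal such that
a boundary failure occurs at `(k, k+1)`, the failure of type (A), `t(k,k) > t(k,k+1)`,
cannot occur, i.e. the failure must be `t(k+1,k+1) ≤ t(k,k+1)`. -/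
theorem boundary_fail_is_typeB (N : ℕ) (p q : ℕ → ℕ) (hfr : FrobData N p q)
    (σ : Equiv.Perm (Fin N)) (t : Box → ℕ) (ht : IsSigmaTab N p q σ t)
    (hDp : SSYTOn (Dp N p) t) (hDq : SSYTOn (DqB N q) t)
    (k : ℕ) (hfail : BoundaryFail N p q t k)
    (hmin : ∀ k' : ℕ, k' < k → ¬ BoundaryFail N p q t k') :
    t (k, k) ≤ t (k, k + 1) ∧
      (k + 1, k + 1) ∈ frobShape N p q ∧ t (k + 1, k + 1) ≤ t (k, k + 1) := by
  obtain ⟨hkN, hpk, hAB⟩ := hfail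
  -- p is strictly decreasing
  have pmono : ∀ i j : ℕ, i < j → j < N → p j < p i := by
    intro i j hij hjN
    induction j with
    | zero => omega
    | succ j ih =>
      have h1 : p (j + 1) < p j := (hfr j hjN).1
      rcases Nat.lt_succ_iff_lt_or_eq.mp hij with h | h
      · exact lt_trans h1 (ih h (by omega))
      · subst h; exact h1
  have qpos : ∀ i : ℕ, i + 1 < N → 0 < q i := by
    intro i h
    have := (hfr i h).2
    omega
  have memDqB : ∀ m b : ℕ, m < N → b ≤ q m → ((m + b : ℕ), m) ∈ DqB N q := by
    intro m b hm hb
    simp only [DqB, Finset.mem_biUnion, Finset.mem_image, Finset.mem_range]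
    exact ⟨m, hm, b, by omega, rfl⟩
  -- diagonal entries strictly increase
  have diag_step : ∀ i : ℕ, i + 1 < N → t (i, i) < t (i + 1, i + 1) := by
    intro i h
    have hq := qpos i h
    have h1 : t (i, i) < t (i + 1, i) := ht.colLeg i (by omega) i le_rfl (by omega)
    have h2 : t (i + 1, i) ≤ t (i + 1, i + 1) := by
      have m1 : ((i + 1 : ℕ), i) ∈ DqB N q := by simpa using memDqB i 1 (by omega) hq
      have m2 : ((i + 1 : ℕ), (i + 1 : ℕ)) ∈ DqB N q := by
        simpa using memDqB (i + 1) 0 h (by omega)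
      exact hDq.1 (i + 1) i m1 m2
    omega
  have diag_mono : ∀ i j : ℕ, i < j → j < N → t (i, i) < t (j, j) := by
    intro i j hij hjN
    induction j with
    | zero => omega
    | succ j ih =>
      rcases Nat.lt_succ_iff_lt_or_eq.mp hij with h | h
      · exact lt_trans (ih h (by omega)) (diag_step j hjN)
      · subst h; exact diag_step i hjN
  have diag_le : ∀ i j : ℕ, i ≤ j → j < N → t (i, i) ≤ t (j, j) := by
    intro i j h hj
    rcases eq_or_lt_of_le h with rfl | h
    · exact le_rfl
    · exact le_of_lt (diag_mono _ _ h hj)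
  have memFrobDiag : ∀ m : ℕ, m < N → ((m : ℕ), m) ∈ frobShape N p q := by
    intro m hm
    simp only [frobShape, Finset.mem_biUnion, Finset.mem_union, Finset.mem_image,
      Finset.mem_range]
    exact ⟨m, hm, Or.inl ⟨0, by omega, by simp⟩⟩
  -- from minimality: for i < k there is no type-B failure at i
  have chain : ∀ i : ℕ, i < k → t (i, i + 1) < t (i + 1, i + 1) := by
    intro i hik
    have hpi : 0 < p i := by
      have := pmono i k hik hkN
      omega
    by_contra hcon
    push_neg at hcon
    exact hmin i hik ⟨by omega, hpi, Or.inr ⟨memFrobDiag (i + 1) (by omega), hcon⟩⟩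
  -- the type-A failure is impossible
  have hnotA : ¬ t (k, k + 1) < t (k, k) := by
    intro hA
    have key : ∀ i : Fin N, i.1 ≤ k → ((σ i : Fin N) : ℕ) < k := by
      intro i hik
      have hpi : 0 < p i.1 := by
        rcases eq_or_lt_of_le hik with h | h
        · rw [h]; exact hpk
        · have := pmono i.1 k h hkN; omega
      have h1 : t ((σ i).1, (σ i).1) ≤ t (i.1, i.1 + 1) := ht.diagCond i hpi
      have h2 : t (i.1, i.1 + 1) < t (k, k) := by
        rcases eq_or_lt_of_le hik with h | h
        · rw [h]; exact hA
        · exact lt_of_lt_of_le (chain i.1 h) (diag_le (i.1 + 1) k h hkN)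
      by_contra hge
      push_neg at hge
      have h3 : t (k, k) ≤ t ((σ i).1, (σ i).1) := diag_le k (σ i).1 hge (σ i).2
      omega
    have hkle : ∀ i : Fin (k + 1), i.1 < N := fun i =>
      lt_of_le_of_lt (Nat.lt_succ_iff.mp i.2) hkN
    let f : Fin (k + 1) → Fin k := fun i =>
      ⟨(σ ⟨i.1, hkle i⟩).1, key ⟨i.1, hkle i⟩ (Nat.lt_succ_iff.mp i.2)⟩
    have hinj : Function.Injective f := by
      intro a b hab
      have h1 := congrArg Fin.val hab
      simp only [f] at h1
      have h2 := σ.injective (Fin.ext h1)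
      have h3 := congrArg Fin.val h2
      simp only [Fin.val_mk] at h3
      exact Fin.ext h3
    have hc := Fintype.card_le_of_injective f hinj
    simp [Fintype.card_fin] at hc
  rcases hAB with h | ⟨hm, hle⟩
  · exact absurd h hnotA
  · exact ⟨le_of_not_gt hnotA, hm, hle⟩
end

section
/- Let λ be a partition with Frobenius notation (p | q), σ ∈ S_N, and T a σ-tableau satisfying the semistandard conditions in D(p) and D(q)∪B, with first boundary failure t_{k+1,k+1} ≤ t_{k,k+1} at minimal k. Let i, j be defined by σ(i)=k, σ(j)=k+1, and set σ' = σ∘(i,j). Then T is also a σ'-tableau; in particular, the signed weight contributions of (σ,T) and (σ',T) cancel. -/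
open scoped BigOperators

private lemma pm_le {N : ℕ} {p q : ℕ → ℕ} (hfr : FrobData N p q) :
    ∀ d a, a + d < N → p (a + d) + d ≤ p a := by
  intro d
  induction d with
  | zero => intro a _; simp
  | succ d ih =>
    intro a h
    have h1 := (hfr (a + d) (by omega)).1
    have h2 := ih a (by omega)
    have : a + (d + 1) = (a + d) + 1 := by omega
    rw [this]
    omega

private lemma memDp {N : ℕ} {p : ℕ → ℕ} {r c : ℕ} (h1 : r < N) (h2 : r < c)
    (h3 : c ≤ r + p r) : (r, c) ∈ Dp N p := by
  simp only [Dp, Finset.mem_biUnion, Finset.mem_range, Finset.mem_image]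
  exact ⟨r, h1, c - r - 1, by omega, by simp only [Prod.mk.injEq, true_and, and_true]; omega⟩

private lemma memDqB {N : ℕ} {q : ℕ → ℕ} {r c : ℕ} (h1 : c < N) (h2 : c ≤ r)
    (h3 : r ≤ c + q c) : (r, c) ∈ DqB N q := by
  simp only [DqB, Finset.mem_biUnion, Finset.mem_range, Finset.mem_image]
  exact ⟨c, h1, r - c, by omega, by simp only [Prod.mk.injEq, true_and, and_true]; omega⟩

private lemma memDiag {N : ℕ} {p q : ℕ → ℕ} {r : ℕ} (h : r < N) :
    (r, r) ∈ frobShape N p q := by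
  simp only [frobShape, Finset.mem_biUnion, Finset.mem_range, Finset.mem_union,
    Finset.mem_image]
  exact ⟨r, h, Or.inl ⟨0, by omega, by simp⟩⟩

/-- Case (iii) of the cancellation lemma, conclusion: with first boundary failure
`t(k+1,k+1) ≤ t(k,k+1)` at minimal `k`, and `i, j` defined by `σ(i) = k`,
`σ(j) = k+1`, the tableau `t` is also a `σ ∘ (i,j)`-tableau, and the signed weight
contributions of `(σ, t)` and `(σ ∘ (i,j), t)` cancel. -/
theorem boundary_fail_cancellation (N : ℕ) (p q : ℕ → ℕ) (hfr : FrobData N p q)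
    (σ : Equiv.Perm (Fin N)) (t : Box → ℕ) (ht : IsSigmaTab N p q σ t)
    (hDp : SSYTOn (Dp N p) t) (hDq : SSYTOn (DqB N q) t)
    (k : ℕ) (hk : k < N) (hpk : 0 < p k)
    (hfail : t (k + 1, k + 1) ≤ t (k, k + 1))
    (hmin : ∀ k' : ℕ, k' < k → ¬ BoundaryFail N p q t k')
    (i j : Fin N) (hi : (σ i).1 = k) (hj : (σ j).1 = k + 1)
    (s : Box → ℂ) :
    IsSigmaTab N p q (σ * Equiv.swap i j) t ∧
      ((Equiv.Perm.sign σ : ℤ) : ℂ) * wt (frobShape N p q) s t +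
        ((Equiv.Perm.sign (σ * Equiv.swap i j) : ℤ) : ℂ) * wt (frobShape N p q) s t = 0 := by

  have hk1 : k + 1 < N := by have := (σ j).2; omega
  have hq : 0 < q k := by have := (hfr k hk1).2; omega
  have hij : i ≠ j := by
    intro h; subst h; rw [hi] at hj; omega
  -- strict decrease of p below k
  have hp' : ∀ m, m ≤ k → p k + (k - m) ≤ p m := by
    intro m hm
    have h1 := pm_le hfr (k - m) m (by omega)
    have h2 : m + (k - m) = k := by omega
    rw [h2] at h1
    omega
  -- boundary non-failure below k
  have step : ∀ m, m < k → t (m, m) ≤ t (m, m + 1) ∧ t (m, m + 1) < t (m + 1, m + 1) := by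
    intro m hm
    have hne := hmin m hm
    have hmN : m < N := by omega
    have hpm : 0 < p m := by have := hp' m (by omega); omega
    have hmem : ((m + 1 : ℕ), (m + 1 : ℕ)) ∈ frobShape N p q := memDiag (by omega)
    constructor
    · by_contra h; exact hne ⟨hmN, hpm, Or.inl (by omega)⟩
    · by_contra h; exact hne ⟨hmN, hpm, Or.inr ⟨hmem, by omega⟩⟩
  -- diagonal entries weakly increase up to k
  have diag : ∀ d b, b + d ≤ k → t (b, b) ≤ t (b + d, b + d) := by
    intro d
    induction d with
    | zero => intro b _; simp
    | succ d ih =>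
      intro b hb
      have h1 := ih b (by omega)
      have h2 := step (b + d) (by omega)
      calc t (b, b) ≤ t (b + d, b + d) := h1
        _ ≤ t (b + d, b + d + 1) := h2.1
        _ ≤ t (b + d + 1, b + d + 1) := le_of_lt h2.2
        _ = t (b + (d + 1), b + (d + 1)) := by ring_nf
  -- key inequality: t(k+1,k+1) ≤ t(m, m+1) for k ≤ m < N with p m > 0
  have L1 : ∀ m, k ≤ m → m < N → 0 < p m → t (k + 1, k + 1) ≤ t (m, m + 1) := by
    intro m hkm hmN hpm
    have hpk' : ∀ r, k ≤ r → r ≤ m → m + 1 ≤ r + p r := by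
      intro r h1 h2
      have := pm_le hfr (m - r) r (by omega)
      have hrm : r + (m - r) = m := by omega
      rw [hrm] at this
      omega
    have row : ∀ c, k + 1 ≤ c → c ≤ m + 1 → t (k, k + 1) ≤ t (k, c) := by
      intro c
      induction c with
      | zero => omega
      | succ n ih =>
        intro h1 h2
        rcases Nat.lt_or_ge (k + 1) (n + 1) with h | h
        · have hn : t (k, n) ≤ t (k, n + 1) := by
            apply ht.rowArm k hk n (by omega)
            have := hpk' k (le_refl _) hkm
            omega
          exact le_trans (ih (by omega) (by omega)) hn
        · have hnk : n + 1 = k + 1 := by omega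
          rw [hnk]
    have col : ∀ d, k + d ≤ m → t (k, m + 1) ≤ t (k + d, m + 1) := by
      intro d
      induction d with
      | zero => intro _; simp
      | succ d ih =>
        intro hd
        have h1 := ih (by omega)
        have h2 : t (k + d, m + 1) < t (k + d + 1, m + 1) := by
          apply hDp.2
          · exact memDp (by omega) (by omega) (hpk' (k + d) (by omega) (by omega))
          · exact memDp (by omega) (by omega) (hpk' (k + d + 1) (by omega) (by omega))
        have : k + (d + 1) = k + d + 1 := by omega
        rw [this]
        omega
    calc t (k + 1, k + 1) ≤ t (k, k + 1) := hfail
      _ ≤ t (k, m + 1) := row (m + 1) (by omega) (le_refl _)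
      _ ≤ t (m, m + 1) := by
          have := col (m - k) (by omega)
          have hmk : k + (m - k) = m := by omega
          rw [hmk] at this
          exact this
  -- the new permutation is a sigma-tableau
  have hTab : IsSigmaTab N p q (σ * Equiv.swap i j) t := by
    refine ⟨ht.pos, ht.rowArm, ht.colLeg, ?_⟩
    intro m hpm
    rw [Equiv.Perm.mul_apply]
    by_cases hmi : m = i
    · subst hmi
      rw [Equiv.swap_apply_left, hj]
      -- need k ≤ m.1
      have hik : k ≤ m.1 := by
        by_contra h
        push_neg at h
        have hd := ht.diagCond m hpm
        rw [hi] at hd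
        have h1 := (step m.1 h).2
        have h2 := diag (k - (m.1 + 1)) (m.1 + 1) (by omega)
        have h3 : m.1 + 1 + (k - (m.1 + 1)) = k := by omega
        rw [h3] at h2
        omega
      exact L1 m.1 hik m.2 hpm
    · by_cases hmj : m = j
      · subst hmj
        rw [Equiv.swap_apply_right, hi]
        have h1 : t (k, k) < t (k + 1, k) := ht.colLeg k hk k (le_refl _) (by omega)
        have h2 : t (k + 1, k) ≤ t (k + 1, k + 1) := by
          apply hDq.1
          · exact memDqB hk (by omega) (by omega)
          · exact memDqB hk1 (le_refl _) (by omega)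
        have h3 := ht.diagCond m hpm
        rw [hj] at h3
        omega
      · rw [Equiv.swap_apply_of_ne_of_ne hmi hmj]
        exact ht.diagCond m hpm
  refine ⟨hTab, ?_⟩
  have hs : Equiv.Perm.sign (σ * Equiv.swap i j) = - Equiv.Perm.sign σ := by
    rw [Equiv.Perm.sign_mul, Equiv.Perm.sign_swap hij, mul_neg_one]
  rw [hs]
  push_cast
  ring
end

section
/- Let λ be a partition with Frobenius notation (p₁,...,p_N | q₁,...,q_N) and let s = (s_{ij}) be a complex filling of λ that is constant on diagonals (s_{ij} = z_{j−i}). If T is a σ-tableau of shape λ for σ ∈ S_N, then the weight factorizes: w(s,T) = ∏_{k=1}^N w(s^F_{k,σ(k)}, T_k(σ)), where T_k(σ) is the hook tableau formed from the arm of row k of T and the leg (with diagonal entry) of column σ(k) of T, and s^F_{k,σ(k)} is the corresponding hook filling (z₀, z₁,...,z_{p_k} along the row; z_{−1},...,z_{−q_{σ(k)}} down the column). -/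
open scoped BigOperators

/-! For a filling constant on diagonals, the weight of `λ = (p | q)` is a product over `k` of
a diagonal factor `t(k,k)^{-z₀}`, an arm factor from row `k` and a leg factor from column `k`.
The hook tableau `T_k(σ)` places these entries at the same diagonal offsets `j - i`, so its
weight is the diagonal and leg factors of `σ(k)` times the arm factor of `k`; as `σ` is a
bijection, reindexing the diagonal and leg factors by `σ` recovers the weight of `λ`. -/

lemma prod_frobShape {M : Type*} [CommMonoid M] (N : ℕ) (p q : ℕ → ℕ) (f : Box → M) :
    ∏ x ∈ frobShape N p q, f x =
      ∏ k ∈ Finset.range N,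
        ((∏ a ∈ Finset.range (p k + 1), f (k, k + a)) *
          ∏ b ∈ Finset.range (q k), f (k + 1 + b, k)) := by
  rw [frobShape, Finset.prod_biUnion ?disjoint]
  case disjoint =>
    intro k _ l _ hkl
    simp only [Function.onFun, Finset.disjoint_left, Finset.mem_union, Finset.mem_image,
      Finset.mem_range]
    rintro x (⟨a, -, rfl⟩ | ⟨b, -, rfl⟩) (⟨a', -, h⟩ | ⟨b', -, h⟩) <;>
      simp only [Prod.mk.injEq] at h <;> omega
  refine Finset.prod_congr rfl fun k _ => ?_
  rw [Finset.prod_union ?armLegDisjoint, Finset.prod_image ?armInj, Finset.prod_image ?legInj]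
  case armLegDisjoint =>
    simp only [Finset.disjoint_left, Finset.mem_image, Finset.mem_range]
    rintro x ⟨a, -, rfl⟩ ⟨b, -, h⟩
    simp only [Prod.mk.injEq] at h; omega
  all_goals intro a _ b _ h; simp only [Prod.mk.injEq] at h; omega

lemma prod_hookShape {M : Type*} [CommMonoid M] (a b : ℕ) (f : Box → M) :
    ∏ x ∈ hookShape a b, f x =
      (∏ j ∈ Finset.range (a + 1), f (0, j)) * ∏ i ∈ Finset.range b, f (i + 1, 0) := by
  simp [hookShape, prod_frobShape, add_comm]

section DiagonalWeights

variable (p q : ℕ → ℕ) (t : Box → ℕ) (z : ℤ → ℂ)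

noncomputable def diagWeight (k : ℕ) : ℂ := (t (k, k) : ℂ) ^ (-(z 0))

noncomputable def armWeight (k : ℕ) : ℂ :=
  ∏ a ∈ Finset.range (p k), (t (k, k + (a + 1)) : ℂ) ^ (-(z ((a : ℤ) + 1)))

noncomputable def legWeight (k : ℕ) : ℂ :=
  ∏ b ∈ Finset.range (q k), (t (k + (b + 1), k) : ℂ) ^ (-(z (-((b : ℤ) + 1))))

lemma wt_frobShape (N : ℕ) :
    wt (frobShape N p q) (fun x => z ((x.2 : ℤ) - x.1)) t =
      ∏ k ∈ Finset.range N, diagWeight t z k * armWeight p t z k * legWeight q t z k := by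
  rw [wt, prod_frobShape]
  refine Finset.prod_congr rfl fun k _ => ?_
  have harm : ∏ j ∈ Finset.range (p k),
      (t (k, k + (j + 1)) : ℂ) ^ (-(z (((k + (j + 1) : ℕ) : ℤ) - k))) = armWeight p t z k :=
    Finset.prod_congr rfl fun j _ => by push_cast; rw [add_sub_cancel_left]
  have hleg : ∏ i ∈ Finset.range (q k),
      (t (k + 1 + i, k) : ℂ) ^ (-(z ((k : ℤ) - ((k + 1 + i : ℕ) : ℤ)))) = legWeight q t z k :=
    Finset.prod_congr rfl fun i _ => by
      rw [add_assoc, add_comm 1 i]; push_cast; rw [sub_add_cancel_left]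
  rw [Finset.prod_range_succ', harm, hleg]
  simp only [diagWeight, add_zero, sub_self]
  ring

end DiagonalWeights

section HookTableau

variable {N : ℕ} (p q : ℕ → ℕ) (σ : Equiv.Perm (Fin N)) (t : Box → ℕ) (k : Fin N)

lemma hookOf_corner : hookOf p q σ t k (0, 0) = t ((σ k).1, (σ k).1) := by
  simp [hookOf]

lemma hookOf_arm {j : ℕ} (hj : j < p k) : hookOf p q σ t k (0, j + 1) = t (k, k + (j + 1)) := by
  simp [hookOf, Nat.succ_le_of_lt hj]

lemma hookOf_leg {i : ℕ} (hi : i < q (σ k)) :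
    hookOf p q σ t k (i + 1, 0) = t ((σ k).1 + (i + 1), (σ k).1) := by
  simp [hookOf, Nat.succ_le_of_lt hi]

lemma wt_hookOf (z : ℤ → ℂ) :
    wt (hookShape (p k) (q (σ k))) (fun x => z ((x.2 : ℤ) - x.1)) (hookOf p q σ t k) =
      diagWeight t z (σ k) * armWeight p t z k * legWeight q t z (σ k) := by
  have harm : ∏ j ∈ Finset.range (p k),
      (hookOf p q σ t k (0, j + 1) : ℂ) ^ (-(z (((j + 1 : ℕ) : ℤ) - (0 : ℕ)))) =
        armWeight p t z k :=
    Finset.prod_congr rfl fun j hj => by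
      rw [hookOf_arm p q σ t k (Finset.mem_range.1 hj)]; push_cast; rw [sub_zero]
  have hleg : ∏ i ∈ Finset.range (q (σ k)),
      (hookOf p q σ t k (i + 1, 0) : ℂ) ^ (-(z (((0 : ℕ) : ℤ) - (i + 1 : ℕ)))) =
        legWeight q t z (σ k) :=
    Finset.prod_congr rfl fun i hi => by
      rw [hookOf_leg p q σ t k (Finset.mem_range.1 hi)]; push_cast; rw [zero_sub]
  rw [wt, prod_hookShape, Finset.prod_range_succ', harm, hleg, hookOf_corner]
  simp only [diagWeight, Nat.cast_zero, sub_zero]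
  ring

end HookTableau

lemma prod_perm_mul_mul {M : Type*} [CommMonoid M] {n : ℕ} (σ : Equiv.Perm (Fin n))
    (f g h : ℕ → M) :
    ∏ k : Fin n, f (σ k) * g k * h (σ k) = ∏ k ∈ Finset.range n, f k * g k * h k := by
  rw [← Fin.prod_univ_eq_prod_range, Finset.prod_mul_distrib, Finset.prod_mul_distrib,
    Finset.prod_mul_distrib, Finset.prod_mul_distrib,
    Equiv.prod_comp σ (fun k => f k), Equiv.prod_comp σ (fun k => h k)]

theorem weight_factorization_general (N : ℕ) (p q : ℕ → ℕ)
    (z : ℤ → ℂ) (σ : Equiv.Perm (Fin N)) (t : Box → ℕ) :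
    wt (frobShape N p q) (fun x => z ((x.2 : ℤ) - x.1)) t =
      ∏ k : Fin N,
        wt (hookShape (p k.1) (q (σ k).1)) (fun x => z ((x.2 : ℤ) - x.1))
          (hookOf p q σ t k) := by
  simp only [wt_hookOf, wt_frobShape, prod_perm_mul_mul]

/-- Factorization of the weight of a `σ`-tableau: for a diagonally constant complex
filling `s(i,j) = z(j - i)` of `λ = (p | q)`, the weight of a `σ`-tableau `t` is the
product of the weights of its hook tableaux `T_k(σ)` with the corresponding hook
fillings `(z₀, z₁, …, z_{p_k}; z_{-1}, …, z_{-q_{σ(k)}})`. -/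
theorem weight_factorization (N : ℕ) (p q : ℕ → ℕ) (hfr : FrobData N p q)
    (z : ℤ → ℂ) (σ : Equiv.Perm (Fin N)) (t : Box → ℕ)
    (ht : IsSigmaTab N p q σ t) :
    wt (frobShape N p q) (fun x => z ((x.2 : ℤ) - x.1)) t =
      ∏ k : Fin N,
        wt (hookShape (p k.1) (q (σ k).1)) (fun x => z ((x.2 : ℤ) - x.1))
          (hookOf p q σ t k) :=
  weight_factorization_general N p q z σ t
end

section
/- For the shape θ given by rows (in skew form) with boxes at positions {(1,4),(2,4),(3,3),(3,4),(4,1),(4,2),(4,3),(4,4)} and the filling s with s_{1,4}=α₂, s_{2,4}=α₁, s_{3,3}=c₀, s_{3,4}=c₁, s_{4,1}=β₂, s_{4,2}=β₁, s_{4,3}=c_{−1}, s_{4,4}=c₀ (all in the convergence domain), the skew Schur multiple zeta value satisfies the 2×2 determinant identity ζ_θ(s) = ζ_{θ₁₁}(s₁₁)·ζ_{(1)}(c₀) − ζ_{θ₁₂}(s₁₂)·ζ_{θ₂₁}(s₂₁), where θ₁₁ is θ with the box (4,4) removed, θ₁₂ = {(1,2),(2,2),(3,1),(3,2)} with entries (α₂;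 α₁; c₀,c₁), and θ₂₁ = {(1,3),(2,1),(2,2),(2,3)} with entries (c₀; β₂,β₁,c_{−1}), products being harmonic products. -/
open scoped BigOperators

/-!
Both products of the determinant are sums over fillings of `θ`: for `ζ_{θ₁₁} ζ_{(1)}` the
filling is semistandard on `θ₁₁` and has an arbitrary positive entry at `(4,4)`; for
`ζ_{θ₁₂} ζ_{θ₂₁}` the shape `θ₁₂` fills rows 1–3 and `θ₂₁` fills row 4, its top box going to
`(4,4)`. The semistandard tableaux of `θ` are among the first kind, and the remaining ones
correspond to those of the second kind by exchanging, in some cases, the entries at `(3,3)` and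
`(4,4)`; both boxes carry `c₀`, so weights are preserved. The rearrangements are justified by
absolute convergence, which holds because the largest entry of a tableau sits in a corner.
-/

open Finset Filter Topology

lemma exists_pos_forall_add_mul_le {ι : Type*} (S : Finset ι) {f : ι → ℝ} {a : ℝ} (b : ℝ)
    (h : ∀ i ∈ S, a < f i) : ∃ ε > 0, ∀ i ∈ S, a + b * ε ≤ f i := by
  have hlim : Tendsto (fun ε : ℝ => a + b * ε) (𝓝 0) (𝓝 a) := by
    simpa using (Continuous.tendsto (f := fun ε : ℝ => a + b * ε) (by fun_prop) 0)
  have hev : ∀ᶠ ε in 𝓝[>] (0 : ℝ), 0 < ε ∧ ∀ i ∈ S, a + b * ε ≤ f i :=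
    eventually_mem_nhdsWithin.and <| (eventually_all_finset S).2 fun i hi =>
      ((hlim.eventually_lt_const (h i hi)).mono fun _ h => h.le).filter_mono nhdsWithin_le_nhds
  obtain ⟨ε, hε, hS⟩ := hev.exists
  exact ⟨ε, hε, hS⟩

lemma summable_prod_pi {ι κ : Type*} [Fintype ι] {g : κ → ℝ} (hg0 : ∀ k, 0 ≤ g k)
    (hg : Summable g) : Summable fun f : ι → κ => ∏ i, g (f i) := by
  classical
  refine summable_of_sum_le (fun f => prod_nonneg fun i _ => hg0 _) (c := ∏ _i : ι, ∑' k, g k)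
    fun S => ?_
  calc ∑ f ∈ S, ∏ i, g (f i)
      ≤ ∑ f ∈ Fintype.piFinset fun i => S.image (· i), ∏ i, g (f i) :=
        sum_le_sum_of_subset_of_nonneg
          (fun f hf => Fintype.mem_piFinset.2 fun i => mem_image_of_mem (· i) hf)
          fun f _ _ => prod_nonneg fun i _ => hg0 _
    _ = ∏ i, ∑ k ∈ S.image (· i), g k := (prod_univ_sum _ _).symm
    _ ≤ ∏ _i : ι, ∑' k, g k :=
        prod_le_prod (fun _ _ => sum_nonneg fun k _ => hg0 k)
          fun _ _ => hg.sum_le_tsum _ fun k _ => hg0 k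

lemma hasSum_sdiff_of_subset {β α : Type*} [NormedAddCommGroup α] [CompleteSpace α]
    {f : β → α} {D S : Set β} {a : α} (hSD : S ⊆ D) (h : HasSum (f ∘ (↑) : D → α) a) :
    HasSum (f ∘ (↑) : ↥(D \ S) → α) (a - ∑' x : S, f x) := by
  have hsum := h.summable.comp_injective (Set.inclusion_injective hSD)
  have hS : HasSum (S.indicator f) (∑' x : S, f x) := hasSum_subtype_iff_indicator.1 hsum.hasSum
  rw [hasSum_subtype_iff_indicator] at h ⊢
  rw [Set.indicator_sdiff hSD]
  exact h.sub hS

section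

variable {θ : Finset Box} {t : Box → ℕ} {s : Box → ℂ}

lemma IsSSYT.exists_corner_forall_le (ht : IsSSYT θ t) (hθ : θ.Nonempty) :
    ∃ c ∈ corners θ, ∀ x ∈ θ, t x ≤ t c := by
  -- among the boxes with maximal entry, one with maximal `i + j` is a corner
  obtain ⟨⟨i, j⟩, hc, hmax⟩ := θ.exists_max_image (fun x => toLex (t x, x.1 + x.2)) hθ
  have hle : ∀ x ∈ θ, t x < t (i, j) ∨ t x = t (i, j) ∧ x.1 + x.2 ≤ i + j := fun x hx =>
    Prod.Lex.toLex_le_toLex.1 (hmax x hx)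
  refine ⟨(i, j), mem_filter.2 ⟨hc, fun hr => ?_, fun hd => ?_⟩, fun x hx => ?_⟩
  · have := ht.2.1 i j hc hr
    have := hle (i, j + 1) hr
    omega
  · have := ht.2.2.1 i j hc hd
    have := hle (i + 1, j) hd
    omega
  · rcases hle x hx with h | h <;> omega

lemma norm_wt (ht : IsSSYT θ t) : ‖wt θ s t‖ = ∏ x ∈ θ, (t x : ℝ) ^ (-(s x).re) := by
  rw [wt, norm_prod]
  refine prod_congr rfl fun x hx => ?_
  rw [Complex.norm_natCast_cpow_of_pos (ht.1 x hx), Complex.neg_re]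

/-- The entry `m` at a corner dominates all the others, so the surplus `#θ * ε` of its exponent
pays for the factors `m ^ ε` lost in lowering every other exponent `≥ 1` to `1 + ε`. -/
lemma norm_wt_le (ht : IsSSYT θ t) {ε : ℝ} (hε : 0 ≤ ε) (hs : ∀ x ∈ θ, 1 ≤ (s x).re)
    (hc : ∀ x ∈ corners θ, 1 + #θ * ε ≤ (s x).re) :
    ‖wt θ s t‖ ≤ ∏ x ∈ θ, (t x : ℝ) ^ (-(1 + ε)) := by
  rcases θ.eq_empty_or_nonempty with rfl | hθ
  · simp [wt]
  obtain ⟨c, hc', hmax⟩ := ht.exists_corner_forall_le hθ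
  have hcθ : c ∈ θ := (mem_filter.1 hc').1
  have one_le : ∀ x ∈ θ, (1 : ℝ) ≤ t x := fun x hx => by exact_mod_cast ht.1 x hx
  set m : ℝ := (t c : ℝ)
  have hm : 1 ≤ m := one_le c hcθ
  have hm0 : 0 < m := by linarith
  have factor : ∀ x ∈ θ, (t x : ℝ) ^ (-(s x).re) ≤ m ^ ε * (t x : ℝ) ^ (-(1 + ε)) := by
    intro x hx
    have hx0 : (0 : ℝ) < t x := by linarith [one_le x hx]
    calc (t x : ℝ) ^ (-(s x).re) ≤ (t x : ℝ) ^ (-1 : ℝ) :=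
          Real.rpow_le_rpow_of_exponent_le (one_le x hx) (by linarith [hs x hx])
      _ = (t x : ℝ) ^ ε * (t x : ℝ) ^ (-(1 + ε)) := by
          rw [← Real.rpow_add hx0]; ring_nf
      _ ≤ m ^ ε * (t x : ℝ) ^ (-(1 + ε)) := by
          gcongr
          exact Nat.cast_le.2 (hmax x hx)
  have corner : m ^ (-(s c).re) ≤ m ^ (-(#θ * ε)) * (m ^ ε * m ^ (-(1 + ε))) := by
    rw [← Real.rpow_add hm0, ← Real.rpow_add hm0]
    exact Real.rpow_le_rpow_of_exponent_le hm (by linarith [hc c hc'])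
  calc ‖wt θ s t‖ = m ^ (-(s c).re) * ∏ x ∈ θ.erase c, (t x : ℝ) ^ (-(s x).re) := by
        rw [norm_wt ht, ← mul_prod_erase _ _ hcθ]
    _ ≤ m ^ (-(#θ * ε)) * (m ^ ε * m ^ (-(1 + ε))) *
          ∏ x ∈ θ.erase c, m ^ ε * (t x : ℝ) ^ (-(1 + ε)) := by
        gcongr with x hx
        exact factor x (mem_of_mem_erase hx)
    _ = m ^ (-(#θ * ε)) * ∏ x ∈ θ, m ^ ε * (t x : ℝ) ^ (-(1 + ε)) := by
        rw [← mul_prod_erase _ (fun x => m ^ ε * (t x : ℝ) ^ (-(1 + ε))) hcθ, mul_assoc]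
    _ = ∏ x ∈ θ, (t x : ℝ) ^ (-(1 + ε)) := by
        rw [prod_mul_distrib, prod_const, ← Real.rpow_natCast, ← Real.rpow_mul hm0.le,
          ← mul_assoc, ← Real.rpow_add hm0, mul_comm ε, neg_add_cancel, Real.rpow_zero, one_mul]

theorem summable_norm_wt (hs : ∀ x ∈ θ, 1 ≤ (s x).re) (hc : ∀ x ∈ corners θ, 1 < (s x).re) :
    Summable fun T : SSYT θ => ‖wt θ s T.1‖ := by
  obtain ⟨ε, hε, hcε⟩ := exists_pos_forall_add_mul_le (corners θ) #θ hc
  have hg := summable_prod_pi (ι := θ) (fun n : ℕ => Real.rpow_nonneg (Nat.cast_nonneg n) _)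
    (Real.summable_nat_rpow.2 (by linarith : -(1 + ε) < -1))
  have hinj : Function.Injective fun (T : SSYT θ) (x : θ) => T.1 x := by
    intro T T' h
    refine Subtype.ext (funext fun x => ?_)
    by_cases hx : x ∈ θ
    · exact congrFun h ⟨x, hx⟩
    · rw [T.2.2.2.2 x hx, T'.2.2.2.2 x hx]
  exact (hg.comp_injective hinj).of_nonneg_of_le (fun _ => norm_nonneg _) fun T =>
    (norm_wt_le T.2 hε.le hs hcε).trans_eq
      (prod_coe_sort θ fun x => (T.1 x : ℝ) ^ (-(1 + ε))).symm

lemma isSSYTOn_iff {A : Finset Box} {f : Box → ℕ} :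
    IsSSYTOn A f ↔ ∀ x ∈ A, 0 < f x ∧ ((x.1, x.2 + 1) ∈ A → f x ≤ f (x.1, x.2 + 1)) ∧
      ((x.1 + 1, x.2) ∈ A → f x < f (x.1 + 1, x.2)) :=
  ⟨fun ⟨hpos, hrow, hcol⟩ x hx => ⟨hpos x hx, hrow x.1 x.2 hx, hcol x.1 x.2 hx⟩,
    fun h => ⟨fun x hx => (h x hx).1, fun _ _ hx => (h _ hx).2.1, fun _ _ hx => (h _ hx).2.2⟩⟩

lemma isSSYT_iff : IsSSYT θ t ↔ IsSSYTOn θ t ∧ ∀ x ∉ θ, t x = 1 := by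
  simp only [IsSSYT, IsSSYTOn, SSYTOn, and_assoc]

lemma IsSSYTOn.congr {A : Finset Box} {f g : Box → ℕ} (hf : IsSSYTOn A f)
    (h : ∀ x ∈ A, f x = g x) : IsSSYTOn A g := by
  rw [isSSYTOn_iff] at hf ⊢
  intro x hx
  obtain ⟨hpos, hrow, hcol⟩ := hf x hx
  rw [← h x hx]
  exact ⟨hpos, fun hr => h _ hr ▸ hrow hr, fun hd => h _ hd ▸ hcol hd⟩

lemma IsSSYTOn.isSSYT_piecewise {A : Finset Box} {f : Box → ℕ} [DecidablePred (· ∈ A)]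
    (hf : IsSSYTOn A f) : IsSSYT A (A.piecewise f 1) :=
  isSSYT_iff.2 ⟨hf.congr fun _ hx => (A.piecewise_eq_of_mem _ _ hx).symm,
    fun _ hx => A.piecewise_eq_of_notMem _ _ hx⟩

lemma wt_congr {s' : Box → ℂ} {t' : Box → ℕ} (hs : ∀ x ∈ θ, s x = s' x)
    (ht : ∀ x ∈ θ, t x = t' x) : wt θ s t = wt θ s' t' :=
  prod_congr rfl fun x hx => by rw [hs x hx, ht x hx]

lemma wt_comp_perm (σ : Equiv.Perm Box) (hσ : {x | σ x ≠ x} ⊆ θ) (hs : ∀ x, s (σ x) = s x) :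
    wt θ s (t ∘ σ) = wt θ s t :=
  calc wt θ s (t ∘ σ) = ∏ x ∈ θ, (t (σ x) : ℂ) ^ (-s (σ x)) :=
        prod_congr rfl fun x _ => by rw [hs]; rfl
    _ = wt θ s t := σ.prod_comp θ (fun x => (t x : ℂ) ^ (-s x)) hσ

section Gluing

variable {A B : Finset Box} {φ ψ : Box → Box}

def IsGluedSSYT (θ A : Finset Box) (φ : Box → Box) (B : Finset Box) (ψ : Box → Box)
    (t : Box → ℕ) : Prop :=
  IsSSYTOn A (t ∘ φ) ∧ IsSSYTOn B (t ∘ ψ) ∧ ∀ x ∉ θ, t x = 1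

noncomputable def glue (A : Finset Box) (φ : Box → Box) (B : Finset Box) (ψ : Box → Box)
    (t₁ t₂ : Box → ℕ) : Box → ℕ := fun x =>
  if x ∈ A.image φ then t₁ (Function.invFunOn φ A x)
  else if x ∈ B.image ψ then t₂ (Function.invFunOn ψ B x) else 1

lemma glue_apply_left (hφ : Set.InjOn φ A) {t₁ t₂ : Box → ℕ} {a : Box} (ha : a ∈ A) :
    glue A φ B ψ t₁ t₂ (φ a) = t₁ a := by
  simp [glue, mem_image_of_mem φ ha, hφ.leftInvOn_invFunOn ha]

lemma glue_apply_right (hψ : Set.InjOn ψ B) (hAB : Disjoint (A.image φ) (B.image ψ))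
    {t₁ t₂ : Box → ℕ} {b : Box} (hb : b ∈ B) : glue A φ B ψ t₁ t₂ (ψ b) = t₂ b := by
  have hb' := mem_image_of_mem ψ hb
  simp [glue, hb', disjoint_right.1 hAB hb', hψ.leftInvOn_invFunOn hb]

lemma glue_apply_of_notMem {t₁ t₂ : Box → ℕ} {x : Box} (hx : x ∉ A.image φ ∪ B.image ψ) :
    glue A φ B ψ t₁ t₂ x = 1 := by
  rw [mem_union, not_or] at hx
  simp [glue, hx.1, hx.2]

noncomputable def glueEquiv (hφ : Set.InjOn φ A) (hψ : Set.InjOn ψ B)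
    (hAB : Disjoint (A.image φ) (B.image ψ)) (hθ : A.image φ ∪ B.image ψ = θ) :
    SSYT A × SSYT B ≃ {t // IsGluedSSYT θ A φ B ψ t} where
  toFun T := ⟨glue A φ B ψ T.1.1 T.2.1,
    (isSSYT_iff.1 T.1.2).1.congr fun _ ha => (glue_apply_left hφ ha).symm,
    (isSSYT_iff.1 T.2.2).1.congr fun _ hb => (glue_apply_right hψ hAB hb).symm,
    fun _ hx => glue_apply_of_notMem (hθ ▸ hx)⟩
  invFun t := (⟨A.piecewise (t.1 ∘ φ) 1, t.2.1.isSSYT_piecewise⟩,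
    ⟨B.piecewise (t.1 ∘ ψ) 1, t.2.2.1.isSSYT_piecewise⟩)
  left_inv T := by
    refine Prod.ext (Subtype.ext (funext fun x => ?_)) (Subtype.ext (funext fun x => ?_))
    · by_cases hx : x ∈ A
      · simp [hx, glue_apply_left hφ hx]
      · simp [hx, T.1.2.2.2.2 x hx]
    · by_cases hx : x ∈ B
      · simp [hx, glue_apply_right hψ hAB hx]
      · simp [hx, T.2.2.2.2.2 x hx]
  right_inv t := by
    refine Subtype.ext (funext fun x => ?_)
    by_cases hA : x ∈ A.image φ
    · obtain ⟨a, ha, rfl⟩ := mem_image.1 hA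
      simp [glue_apply_left hφ ha, ha]
    by_cases hB : x ∈ B.image ψ
    · obtain ⟨b, hb, rfl⟩ := mem_image.1 hB
      simp [glue_apply_right hψ hAB hb, hb]
    have hx : x ∉ A.image φ ∪ B.image ψ := by simp [hA, hB]
    show glue A φ B ψ _ _ x = t.1 x
    rw [glue_apply_of_notMem hx, t.2.2.2 x (hθ ▸ hx)]

lemma wt_eq_mul_of_union_image (hφ : Set.InjOn φ A) (hψ : Set.InjOn ψ B)
    (hAB : Disjoint (A.image φ) (B.image ψ)) (hθ : A.image φ ∪ B.image ψ = θ) :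
    wt θ s t = wt A (s ∘ φ) (t ∘ φ) * wt B (s ∘ ψ) (t ∘ ψ) := by
  rw [← hθ, wt, prod_union hAB, prod_image hφ, prod_image hψ]
  rfl

theorem hasSum_wt_isGluedSSYT {s₁ s₂ : Box → ℂ} (hφ : Set.InjOn φ A) (hψ : Set.InjOn ψ B)
    (hAB : Disjoint (A.image φ) (B.image ψ)) (hθ : A.image φ ∪ B.image ψ = θ)
    (h₁ : ∀ a ∈ A, s₁ a = s (φ a)) (h₂ : ∀ b ∈ B, s₂ b = s (ψ b))
    (hs₁ : Summable fun T : SSYT A => ‖wt A s₁ T.1‖)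
    (hs₂ : Summable fun T : SSYT B => ‖wt B s₂ T.1‖) :
    HasSum (fun t : {t // IsGluedSSYT θ A φ B ψ t} => wt θ s t.1) (zetaS A s₁ * zetaS B s₂) := by
  have hwt : ∀ T : SSYT A × SSYT B,
      wt θ s (glueEquiv hφ hψ hAB hθ T).1 = wt A s₁ T.1.1 * wt B s₂ T.2.1 := fun T => by
    rw [wt_eq_mul_of_union_image hφ hψ hAB hθ]
    congr 1 <;> refine wt_congr (fun x hx => ?_) (fun x hx => ?_)
    · exact (h₁ x hx).symm
    · exact glue_apply_left hφ hx
    · exact (h₂ x hx).symm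
    · exact glue_apply_right hψ hAB hx
  rw [← (glueEquiv hφ hψ hAB hθ).hasSum_iff, zetaS, zetaS, tsum_mul_tsum_of_summable_norm hs₁ hs₂]
  simp only [Function.comp_def, hwt]
  exact (hs₁.mul_norm hs₂).of_norm.hasSum

end Gluing

end

namespace GiambelliExample

abbrev θ : Finset Box := {(1,4),(2,4),(3,3),(3,4),(4,1),(4,2),(4,3),(4,4)}
abbrev θ₁₁ : Finset Box := {(1,4),(2,4),(3,3),(3,4),(4,1),(4,2),(4,3)}
abbrev θ₁₂ : Finset Box := {(1,2),(2,2),(3,1),(3,2)}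
abbrev θ₂₁ : Finset Box := {(1,3),(2,1),(2,2),(2,3)}

def shift (u v : ℕ) (x : Box) : Box := (u + x.1, v + x.2)

lemma shift_injective (u v : ℕ) : Function.Injective (shift u v) :=
  fun _ _ h => Prod.ext (Nat.add_left_cancel (congrArg Prod.fst h))
    (Nat.add_left_cancel (congrArg Prod.snd h))

abbrev τ : Equiv.Perm Box := Equiv.swap (3,3) (4,4)

/-- Tableaux of the diagonal term `ζ_{θ₁₁} ζ_{(1)}`, laid out on `θ`. -/
def IsDiagTerm (t : Box → ℕ) : Prop := IsGluedSSYT θ θ₁₁ id {(1,1)} (fun _ => (4,4)) t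

/-- Tableaux of the antidiagonal term `ζ_{θ₁₂} ζ_{θ₂₁}`, laid out on `θ`. -/
def IsAntidiagTerm (t : Box → ℕ) : Prop :=
  IsGluedSSYT θ θ₁₂ (shift 0 2) θ₂₁ (τ ∘ shift 2 0) t

section

variable {t : Box → ℕ}

lemma isSSYT_θ_iff : IsSSYT θ t ↔
    (0 < t (1,4) ∧ t (1,4) < t (2,4) ∧ t (2,4) < t (3,4) ∧ 0 < t (3,3) ∧ t (3,3) ≤ t (3,4) ∧
      t (3,3) < t (4,3) ∧ t (3,4) < t (4,4) ∧ 0 < t (4,1) ∧ t (4,1) ≤ t (4,2) ∧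
      t (4,2) ≤ t (4,3) ∧ t (4,3) ≤ t (4,4)) ∧ ∀ x ∉ θ, t x = 1 := by
  rw [isSSYT_iff]
  refine and_congr_left' ?_
  simp [isSSYTOn_iff]
  omega

lemma isDiagTerm_iff : IsDiagTerm t ↔
    (0 < t (1,4) ∧ t (1,4) < t (2,4) ∧ t (2,4) < t (3,4) ∧ 0 < t (3,3) ∧ t (3,3) ≤ t (3,4) ∧
      t (3,3) < t (4,3) ∧ 0 < t (4,4) ∧ 0 < t (4,1) ∧ t (4,1) ≤ t (4,2) ∧
      t (4,2) ≤ t (4,3)) ∧ ∀ x ∉ θ, t x = 1 := by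
  rw [IsDiagTerm, IsGluedSSYT, ← and_assoc]
  refine and_congr_left' ?_
  simp [isSSYTOn_iff]
  omega

lemma isAntidiagTerm_iff : IsAntidiagTerm t ↔
    (0 < t (1,4) ∧ t (1,4) < t (2,4) ∧ t (2,4) < t (3,4) ∧ 0 < t (3,3) ∧ t (3,3) ≤ t (3,4) ∧
      0 < t (4,4) ∧ t (4,4) < t (4,3) ∧ 0 < t (4,1) ∧ t (4,1) ≤ t (4,2) ∧
      t (4,2) ≤ t (4,3)) ∧ ∀ x ∉ θ, t x = 1 := by
  rw [IsAntidiagTerm, IsGluedSSYT, ← and_assoc]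
  refine and_congr_left' ?_
  simp [isSSYTOn_iff, shift, Equiv.swap_apply_of_ne_of_ne]
  omega

lemma isDiagTerm_of_isSSYT (ht : IsSSYT θ t) : IsDiagTerm t := by
  rw [isSSYT_θ_iff] at ht
  rw [isDiagTerm_iff]
  exact ⟨by omega, ht.2⟩

/-- On a diagonal-term tableau that is not semistandard on `θ`, the entry `w` at `(4,4)`
violates `t (3,4) < w` or `t (4,3) ≤ w`. If `t (4,3) ≤ t (3,4) + 1` the violation is
`w ≤ t (3,4)`, and exchanging `w` with the entry at `(3,3)` gives an antidiagonal-term tableau;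
otherwise it is `w < t (4,3)`, and the tableau already is one. -/
def exchange (t : Box → ℕ) : Box → ℕ := if t (4,3) ≤ t (3,4) + 1 then t ∘ τ else t

lemma τ_apply_of_notMem {x : Box} (hx : x ∉ θ) : τ x = x :=
  Equiv.swap_apply_of_ne_of_ne (by rintro rfl; simp at hx) (by rintro rfl; simp at hx)

lemma exchange_involutive : Function.Involutive exchange := by
  intro t
  by_cases h : t (4,3) ≤ t (3,4) + 1
  · have h' : (t ∘ τ) (4,3) ≤ (t ∘ τ) (3,4) + 1 := by
      simpa [Equiv.swap_apply_of_ne_of_ne] using h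
    simp only [exchange, if_pos h, if_pos h']
    funext x
    simp
  · simp [exchange, h]

lemma wt_exchange {s : Box → ℂ} (hs : s (3,3) = s (4,4)) : wt θ s (exchange t) = wt θ s t := by
  unfold exchange
  split_ifs
  · refine wt_comp_perm τ (fun x hx => ?_) fun x => ?_
    · by_contra hxθ
      exact hx (τ_apply_of_notMem hxθ)
    · rcases eq_or_ne x (3,3) with rfl | h₁
      · simp [hs]
      rcases eq_or_ne x (4,4) with rfl | h₂
      · simp [hs]
      rw [Equiv.swap_apply_of_ne_of_ne h₁ h₂]
  · rfl

lemma isAntidiagTerm_exchange (h : IsDiagTerm t) (h' : ¬IsSSYT θ t) :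
    IsAntidiagTerm (exchange t) := by
  rw [isDiagTerm_iff] at h
  rw [isSSYT_θ_iff, not_and'] at h'
  have h' := h' h.2
  rw [isAntidiagTerm_iff]
  unfold exchange
  split_ifs with hc
  · refine ⟨?_, fun x hx => ?_⟩
    · simp [Equiv.swap_apply_of_ne_of_ne]
      omega
    · simp [τ_apply_of_notMem hx, h.2 x hx]
  · exact ⟨by omega, h.2⟩

lemma isDiagTerm_exchange (h : IsAntidiagTerm t) :
    IsDiagTerm (exchange t) ∧ ¬IsSSYT θ (exchange t) := by
  rw [isAntidiagTerm_iff] at h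
  rw [isDiagTerm_iff, isSSYT_θ_iff]
  unfold exchange
  split_ifs with hc
  · refine ⟨⟨?_, fun x hx => ?_⟩, fun ⟨h', _⟩ => ?_⟩
    · simp [Equiv.swap_apply_of_ne_of_ne]
      omega
    · simp [τ_apply_of_notMem hx, h.2 x hx]
    · simp [Equiv.swap_apply_of_ne_of_ne] at h'
      omega
  · exact ⟨⟨by omega, h.2⟩, fun ⟨h', _⟩ => by omega⟩

def exchangeEquiv : {t // IsDiagTerm t ∧ ¬IsSSYT θ t} ≃ {t // IsAntidiagTerm t} where
  toFun t := ⟨exchange t.1, isAntidiagTerm_exchange t.2.1 t.2.2⟩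
  invFun t := ⟨exchange t.1, (isDiagTerm_exchange t.2).1, (isDiagTerm_exchange t.2).2⟩
  left_inv t := Subtype.ext (exchange_involutive t.1)
  right_inv t := Subtype.ext (exchange_involutive t.1)

end

theorem hasSum_antidiagTerm {s : Box → ℂ} {a : ℂ} (hs : s (3,3) = s (4,4))
    (h : HasSum (fun t : {t // IsDiagTerm t} => wt θ s t.1) a) :
    HasSum (fun t : {t // IsAntidiagTerm t} => wt θ s t.1) (a - zetaS θ s) := by
  have hwt : (fun t : {t // IsAntidiagTerm t} => wt θ s t.1) ∘ exchangeEquiv =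
      fun t => wt θ s t.1 := funext fun _ => wt_exchange hs
  rw [← exchangeEquiv.hasSum_iff, hwt]
  exact hasSum_sdiff_of_subset (D := {t | IsDiagTerm t}) (S := {t | IsSSYT θ t})
    (fun _ => isDiagTerm_of_isSSYT) h

theorem zetaS_θ_eq_det {s s₁₁ s₁ s₁₂ s₂₁ : Box → ℂ} (hs : s (3,3) = s (4,4))
    (h₁₁ : ∀ x ∈ θ₁₁, s₁₁ x = s x) (h₁ : s₁ (1,1) = s (4,4))
    (h₁₂ : ∀ x ∈ θ₁₂, s₁₂ x = s (shift 0 2 x)) (h₂₁ : ∀ x ∈ θ₂₁, s₂₁ x = s (τ (shift 2 0 x)))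
    (hs₁₁ : Summable fun T : SSYT θ₁₁ => ‖wt θ₁₁ s₁₁ T.1‖)
    (hs₁ : Summable fun T : SSYT {(1,1)} => ‖wt {(1,1)} s₁ T.1‖)
    (hs₁₂ : Summable fun T : SSYT θ₁₂ => ‖wt θ₁₂ s₁₂ T.1‖)
    (hs₂₁ : Summable fun T : SSYT θ₂₁ => ‖wt θ₂₁ s₂₁ T.1‖) :
    zetaS θ s = zetaS θ₁₁ s₁₁ * zetaS {(1,1)} s₁ - zetaS θ₁₂ s₁₂ * zetaS θ₂₁ s₂₁ := by
  have hdiag := hasSum_wt_isGluedSSYT (θ := θ) (s := s) (φ := id) (ψ := fun _ => (4,4))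
    (Set.injOn_id _) (by rw [coe_singleton]; exact Set.injOn_singleton _ _) (by decide)
    (by decide) h₁₁ (by simpa using h₁) hs₁₁ hs₁
  have hanti := hasSum_wt_isGluedSSYT (θ := θ) (s := s) (shift_injective 0 2).injOn
    (τ.injective.comp (shift_injective 2 0)).injOn (by decide) (by decide) h₁₂ h₂₁ hs₁₂ hs₂₁
  linear_combination -(hasSum_antidiagTerm hs hdiag).unique hanti

end GiambelliExample

/-- Example 1.4 of the paper: the `2 × 2` Giambelli determinant identity for the
winged shape `θ = {(1,4),(2,4),(3,3),(3,4),(4,1),(4,2),(4,3),(4,4)}` with filling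
`(α₂; α₁; c₀, c₁; β₂, β₁, c₋₁, c₀)`:
`ζ_θ(s) = ζ_{θ₁₁}(s₁₁) ζ_{(1)}(c₀) - ζ_{θ₁₂}(s₁₂) ζ_{θ₂₁}(s₂₁)`. -/
theorem example_laced_giambelli (α₂ α₁ c₁ c₀ cm β₁ β₂ : ℂ)
    (hα₂ : 1 ≤ α₂.re) (hα₁ : 1 ≤ α₁.re) (hβ₁ : 1 ≤ β₁.re) (hβ₂ : 1 ≤ β₂.re)
    (hc₁ : 1 < c₁.re) (hc₀ : 1 < c₀.re) (hcm : 1 < cm.re) :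
    zetaS ({(1,4),(2,4),(3,3),(3,4),(4,1),(4,2),(4,3),(4,4)} : Finset Box)
        (fun x =>
          if x = (1,4) then α₂ else if x = (2,4) then α₁
          else if x = (3,3) then c₀ else if x = (3,4) then c₁
          else if x = (4,1) then β₂ else if x = (4,2) then β₁
          else if x = (4,3) then cm else if x = (4,4) then c₀ else 1) =
      zetaS ({(1,4),(2,4),(3,3),(3,4),(4,1),(4,2),(4,3)} : Finset Box)
          (fun x =>
            if x = (1,4) then α₂ else if x = (2,4) then α₁
            else if x = (3,3) then c₀ else if x = (3,4) then c₁
            else if x = (4,1) then β₂ else if x = (4,2) then β₁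
            else if x = (4,3) then cm else 1) *
        zetaS ({(1,1)} : Finset Box) (fun _ => c₀) -
      zetaS ({(1,2),(2,2),(3,1),(3,2)} : Finset Box)
          (fun x =>
            if x = (1,2) then α₂ else if x = (2,2) then α₁
            else if x = (3,1) then c₀ else if x = (3,2) then c₁ else 1) *
        zetaS ({(1,3),(2,1),(2,2),(2,3)} : Finset Box)
          (fun x =>
            if x = (1,3) then c₀ else if x = (2,1) then β₂
            else if x = (2,2) then β₁ else if x = (2,3) then cm else 1) := by
  refine GiambelliExample.zetaS_θ_eq_det (by simp) (by simp) (by simp)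
    (by simp [GiambelliExample.shift])
    (by simp [GiambelliExample.shift, Equiv.swap_apply_of_ne_of_ne])
    (summable_norm_wt ?_ ?_) (summable_norm_wt ?_ ?_) (summable_norm_wt ?_ ?_)
    (summable_norm_wt ?_ ?_)
  all_goals simp [corners, hα₂, hα₁, hβ₂, hβ₁, hc₀, hc₁, hcm, hc₀.le, hc₁.le, hcm.le]
end
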